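/- arXiv:1205.1145 — 13 statements merged into one kernel-verified Lean document; each statement's English description precedes it below -/
import Mathlib

section
/- Let A, B, C, M be points of a real inner product space, let t₁, t₂, t₃ be real numbers with t := t₁+t₂+t₃ ≠ 0, and let P be the barycenter of {A,B,C} with weights (t₁,t₂,t₃). Then t² · MP² = t·(t₁·MA² + t₂·MB² + t₃·MC²) − (t₂t₃·a² + t₃t₁·b² + t₁t₂·c²), where a = BC, b = CA, c = AB and XY denotes the distance between points X and Y. -/
open Finset

/-! Lagrange's identity: expanding both `‖∑ wᵢ vᵢ‖²` and `∑ wᵢ wⱼ ‖vᵢ - vⱼ‖²` into inner products,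
the cross terms `⟪vᵢ, vⱼ⟫` agree, so the first is `(∑ wᵢ)(∑ wᵢ ‖vᵢ‖²)` minus half the second.
The theorem is the case of three vectors `A - M, B - M, C - M`, whose weighted sum is `t • (P - M)`. -/

theorem norm_sum_smul_sq_eq {E ι : Type*} [NormedAddCommGroup E] [InnerProductSpace ℝ E]
    (s : Finset ι) (w : ι → ℝ) (v : ι → E) :
    ‖∑ i ∈ s, w i • v i‖ ^ 2 =
      (∑ i ∈ s, w i) * ∑ i ∈ s, w i * ‖v i‖ ^ 2 -
        (∑ i ∈ s, ∑ j ∈ s, w i * w j * ‖v i - v j‖ ^ 2) / 2 := by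
  have hnorm : ‖∑ i ∈ s, w i • v i‖ ^ 2 = ∑ i ∈ s, ∑ j ∈ s, w i * w j * inner ℝ (v i) (v j) := by
    rw [← real_inner_self_eq_norm_sq, sum_inner]
    simp_rw [inner_sum, inner_smul_left, inner_smul_right, RCLike.conj_to_real, mul_assoc]
  have hright : ∑ i ∈ s, ∑ j ∈ s, w i * w j * ‖v j‖ ^ 2 =
      (∑ i ∈ s, w i) * ∑ i ∈ s, w i * ‖v i‖ ^ 2 := by
    simp_rw [sum_mul_sum, mul_assoc]
  have hleft : ∑ i ∈ s, ∑ j ∈ s, w i * w j * ‖v i‖ ^ 2 =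
      (∑ i ∈ s, w i) * ∑ i ∈ s, w i * ‖v i‖ ^ 2 := by
    rw [sum_comm, ← hright]
    simp_rw [mul_comm (w _) (w _)]
  have hdist : ∑ i ∈ s, ∑ j ∈ s, w i * w j * ‖v i - v j‖ ^ 2 =
      2 * ((∑ i ∈ s, w i) * ∑ i ∈ s, w i * ‖v i‖ ^ 2) -
        2 * ∑ i ∈ s, ∑ j ∈ s, w i * w j * inner ℝ (v i) (v j) := by
    simp_rw [norm_sub_sq_real, mul_add, mul_sub, sum_add_distrib, sum_sub_distrib, hleft, hright,
      mul_left_comm _ (2 : ℝ), ← mul_sum]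
    ring
  rw [hnorm, hdist]
  ring

theorem stmt_0_general {E : Type*} [NormedAddCommGroup E] [InnerProductSpace ℝ E]
    (A B C M P : E) (t₁ t₂ t₃ : ℝ)
    (hP : ∀ N : E, (t₁ + t₂ + t₃) • (P - N) = t₁ • (A - N) + t₂ • (B - N) + t₃ • (C - N)) :
    (t₁ + t₂ + t₃) ^ 2 * dist M P ^ 2 =
      (t₁ + t₂ + t₃) * (t₁ * dist M A ^ 2 + t₂ * dist M B ^ 2 + t₃ * dist M C ^ 2) -
        (t₂ * t₃ * dist B C ^ 2 + t₃ * t₁ * dist C A ^ 2 + t₁ * t₂ * dist A B ^ 2) := by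
  have hlagrange := norm_sum_smul_sq_eq univ ![t₁, t₂, t₃] ![A - M, B - M, C - M]
  simp only [Fin.sum_univ_three, Matrix.cons_val_zero, Matrix.cons_val_one, Matrix.cons_val_two,
    Matrix.head_cons, Matrix.tail_cons, sub_self, norm_zero, sub_sub_sub_cancel_right, ← hP M,
    norm_smul, mul_pow, Real.norm_eq_abs, sq_abs] at hlagrange
  simp only [dist_comm M, dist_eq_norm, hlagrange, norm_sub_rev A B, norm_sub_rev C A, norm_sub_rev B C]
  ring

/-- If `P` is the barycenter of `{A, B, C}` with weights `(t₁, t₂, t₃)` and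
`t = t₁ + t₂ + t₃ ≠ 0`, then for any point `M`,
`t² · MP² = t·(t₁·MA² + t₂·MB² + t₃·MC²) − (t₂t₃·a² + t₃t₁·b² + t₁t₂·c²)`. -/
theorem stmt_0 {E : Type*} [NormedAddCommGroup E] [InnerProductSpace ℝ E]
    (A B C M P : E) (t₁ t₂ t₃ : ℝ)
    (ht : t₁ + t₂ + t₃ ≠ 0)
    (hP : ∀ N : E, (t₁ + t₂ + t₃) • (P - N) = t₁ • (A - N) + t₂ • (B - N) + t₃ • (C - N)) :
    (t₁ + t₂ + t₃) ^ 2 * dist M P ^ 2 =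
      (t₁ + t₂ + t₃) * (t₁ * dist M A ^ 2 + t₂ * dist M B ^ 2 + t₃ * dist M C ^ 2) -
        (t₂ * t₃ * dist B C ^ 2 + t₃ * t₁ * dist C A ^ 2 + t₁ * t₂ * dist A B ^ 2) :=
  stmt_0_general A B C M P t₁ t₂ t₃ hP
end

section
/- Let A, B, C, M be points of a real inner product space, let t₁, t₂, t₃ be nonzero real numbers with t := t₁+t₂+t₃ ≠ 0, and let P be the barycenter of {A,B,C} with weights (t₁,t₂,t₃). Then Lagrange's relation holds: MP² = (t₁·MA² + t₂·MB² + t₃·MC²)/t − (t₁t₂t₃/t²)·(a²/t₁ + b²/t₂ + c²/t₃), where a = BC, b = CA, c = AB. -/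
/-!
Expanding both `‖∑ tᵢ • uᵢ‖²` and every `‖uᵢ - uⱼ‖²` in inner products gives the weighted
Lagrange identity `‖∑ tᵢ • uᵢ‖² = (∑ tᵢ) (∑ tᵢ ‖uᵢ‖²) - ½ ∑ᵢ ∑ⱼ tᵢ tⱼ ‖uᵢ - uⱼ‖²`.
With `uᵢ = Aᵢ - M` the left side is `t² MP²`, and for three points the double sum is
`2 (t₂ t₃ a² + t₃ t₁ b² + t₁ t₂ c²)`.
-/

open RealInnerProductSpace Finset

theorem norm_sum_smul_sq {E ι : Type*} [NormedAddCommGroup E] [InnerProductSpace ℝ E]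
    (s : Finset ι) (t : ι → ℝ) (u : ι → E) :
    ‖∑ i ∈ s, t i • u i‖ ^ 2 =
      (∑ i ∈ s, t i) * (∑ i ∈ s, t i * ‖u i‖ ^ 2) -
        (∑ i ∈ s, ∑ j ∈ s, t i * t j * ‖u i - u j‖ ^ 2) / 2 := by
  have hsq : ‖∑ i ∈ s, t i • u i‖ ^ 2 = ∑ i ∈ s, ∑ j ∈ s, t i * t j * ⟪u i, u j⟫ := by
    rw [← real_inner_self_eq_norm_sq, sum_inner]
    simp only [inner_sum, real_inner_smul_left, real_inner_smul_right]
    exact sum_congr rfl fun i _ => sum_congr rfl fun j _ => by ring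
  have hsplit : ∀ i j, t i * t j * ‖u i - u j‖ ^ 2 =
      t j * (t i * ‖u i‖ ^ 2) + t i * (t j * ‖u j‖ ^ 2) - 2 * (t i * t j * ⟪u i, u j⟫) := by
    intro i j
    rw [norm_sub_sq_real]
    ring
  simp only [hsplit, sum_sub_distrib, sum_add_distrib, ← mul_sum, ← sum_mul]
  rw [hsq]
  ring

theorem dist_sq_of_smul_sub_eq_sum_smul_sub {E ι : Type*} [NormedAddCommGroup E]
    [InnerProductSpace ℝ E] (s : Finset ι) (t : ι → ℝ) (A : ι → E) (M P : E)
    (ht : ∑ i ∈ s, t i ≠ 0) (hP : (∑ i ∈ s, t i) • (P - M) = ∑ i ∈ s, t i • (A i - M)) :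
    dist M P ^ 2 =
      (∑ i ∈ s, t i * dist M (A i) ^ 2) / ∑ i ∈ s, t i -
        (∑ i ∈ s, ∑ j ∈ s, t i * t j * dist (A i) (A j) ^ 2) / (2 * (∑ i ∈ s, t i) ^ 2) := by
  have h : ‖(∑ i ∈ s, t i) • (P - M)‖ ^ 2 = ‖∑ i ∈ s, t i • (A i - M)‖ ^ 2 := by rw [hP]
  simp only [norm_smul, mul_pow, Real.norm_eq_abs, sq_abs, norm_sum_smul_sq,
    sub_sub_sub_cancel_right] at h
  simp only [dist_comm M, dist_eq_norm]
  field_simp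
  linarith

/-- Lagrange's relation: if `P` is the barycenter of `{A, B, C}` with nonzero
weights `(t₁, t₂, t₃)` and `t = t₁ + t₂ + t₃ ≠ 0`, then for any point `M`,
`MP² = (t₁·MA² + t₂·MB² + t₃·MC²)/t − (t₁t₂t₃/t²)·(a²/t₁ + b²/t₂ + c²/t₃)`. -/
theorem stmt_1 {E : Type*} [NormedAddCommGroup E] [InnerProductSpace ℝ E]
    (A B C M P : E) (t₁ t₂ t₃ : ℝ)
    (ht₁ : t₁ ≠ 0) (ht₂ : t₂ ≠ 0) (ht₃ : t₃ ≠ 0)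
    (ht : t₁ + t₂ + t₃ ≠ 0)
    (hP : ∀ N : E, (t₁ + t₂ + t₃) • (P - N) = t₁ • (A - N) + t₂ • (B - N) + t₃ • (C - N)) :
    dist M P ^ 2 =
      (t₁ * dist M A ^ 2 + t₂ * dist M B ^ 2 + t₃ * dist M C ^ 2) / (t₁ + t₂ + t₃) -
        (t₁ * t₂ * t₃ / (t₁ + t₂ + t₃) ^ 2) *
          (dist B C ^ 2 / t₁ + dist C A ^ 2 / t₂ + dist A B ^ 2 / t₃) := by
  have h := dist_sq_of_smul_sub_eq_sum_smul_sub univ ![t₁, t₂, t₃] ![A, B, C] M P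
    (by simpa [Fin.sum_univ_three] using ht) (by simpa [Fin.sum_univ_three] using hP M)
  simp only [Fin.sum_univ_three, Matrix.cons_val_zero, Matrix.cons_val_one, Matrix.cons_val_two,
    Matrix.head_cons, Matrix.tail_cons, dist_self] at h
  rw [h, dist_comm B A, dist_comm C B, dist_comm A C]
  field_simp
  ring
end

section
/- Let ABC be a nondegenerate triangle in the Euclidean plane with circumcenter O and circumradius R, and let P be a point with barycentric coordinates t₁:t₂:t₃, where t₁, t₂, t₃ are nonzero and t := t₁+t₂+t₃ ≠ 0. Then R² − OP² = (t₁t₂t₃/t²)·(a²/t₁ + b²/t₂ + c²/t₃). -/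
/-!
Writing `u, v, w` for the vectors from `O` to the vertices, `t • (P - O) = t₁ u + t₂ v + t₃ w`.
Expanding the square norm of a weighted sum of three vectors gives Lagrange's identity
`‖t₁ u + t₂ v + t₃ w‖² = t (t₁‖u‖² + t₂‖v‖² + t₃‖w‖²) - (t₁t₂‖u - v‖² + t₂t₃‖v - w‖² + t₃t₁‖w - u‖²)`.
Since `‖u‖ = ‖v‖ = ‖w‖ = R`, this reads `t² OP² = t² R² - (t₁t₂c² + t₂t₃a² + t₃t₁b²)`,
and dividing by `t²` gives the formula.
-/

section Lagrange

variable {V : Type*} [NormedAddCommGroup V] [InnerProductSpace ℝ V]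

theorem norm_smul_add_smul_add_smul_sq (t₁ t₂ t₃ : ℝ) (u v w : V) :
    ‖t₁ • u + t₂ • v + t₃ • w‖ ^ 2 =
      (t₁ + t₂ + t₃) * (t₁ * ‖u‖ ^ 2 + t₂ * ‖v‖ ^ 2 + t₃ * ‖w‖ ^ 2) -
        (t₁ * t₂ * ‖u - v‖ ^ 2 + t₂ * t₃ * ‖v - w‖ ^ 2 + t₃ * t₁ * ‖w - u‖ ^ 2) := by
  simp only [← real_inner_self_eq_norm_sq, inner_add_left, inner_add_right, inner_sub_left,
    inner_sub_right, real_inner_smul_left, real_inner_smul_right, real_inner_comm u v,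
    real_inner_comm u w, real_inner_comm v w]
  ring

theorem sq_mul_dist_sq_eq_of_smul_sub_eq {A B C O P : V} {t₁ t₂ t₃ : ℝ}
    (hP : (t₁ + t₂ + t₃) • (P - O) = t₁ • (A - O) + t₂ • (B - O) + t₃ • (C - O)) :
    (t₁ + t₂ + t₃) ^ 2 * dist O P ^ 2 =
      (t₁ + t₂ + t₃) * (t₁ * dist O A ^ 2 + t₂ * dist O B ^ 2 + t₃ * dist O C ^ 2) -
        (t₁ * t₂ * dist A B ^ 2 + t₂ * t₃ * dist B C ^ 2 + t₃ * t₁ * dist C A ^ 2) := by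
  have hsq := congrArg (‖·‖ ^ 2) hP
  simp only [norm_smul, mul_pow, Real.norm_eq_abs, sq_abs,
    norm_smul_add_smul_add_smul_sq] at hsq
  simp only [dist_comm O, dist_eq_norm, sub_sub_sub_cancel_right] at hsq ⊢
  exact hsq

end Lagrange

theorem stmt_2_general (A B C O P : EuclideanSpace ℝ (Fin 2)) (a b c R t₁ t₂ t₃ : ℝ)
    (ha : a = dist B C) (hb : b = dist C A) (hc : c = dist A B)
    (hOA : dist O A = R) (hOB : dist O B = R) (hOC : dist O C = R)
    (ht₁ : t₁ ≠ 0) (ht₂ : t₂ ≠ 0) (ht₃ : t₃ ≠ 0)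
    (ht : t₁ + t₂ + t₃ ≠ 0)
    (hP : ∀ M : EuclideanSpace ℝ (Fin 2),
      (t₁ + t₂ + t₃) • (P - M) = t₁ • (A - M) + t₂ • (B - M) + t₃ • (C - M)) :
    R ^ 2 - dist O P ^ 2 =
      (t₁ * t₂ * t₃ / (t₁ + t₂ + t₃) ^ 2) * (a ^ 2 / t₁ + b ^ 2 / t₂ + c ^ 2 / t₃) := by
  have hLagrange := sq_mul_dist_sq_eq_of_smul_sub_eq (hP O)
  rw [hOA, hOB, hOC, ← ha, ← hb, ← hc] at hLagrange
  have hOP : dist O P ^ 2 =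
      R ^ 2 - (t₁ * t₂ * c ^ 2 + t₂ * t₃ * a ^ 2 + t₃ * t₁ * b ^ 2) / (t₁ + t₂ + t₃) ^ 2 := by
    field_simp
    linarith
  rw [hOP]
  field_simp
  ring

/-- In a nondegenerate triangle `ABC` with circumcenter `O` and circumradius `R`,
if `P` has barycentric coordinates `t₁ : t₂ : t₃` (all nonzero, with nonzero sum `t`), then
`R² − OP² = (t₁t₂t₃/t²)·(a²/t₁ + b²/t₂ + c²/t₃)`. -/
theorem stmt_2 (A B C O P : EuclideanSpace ℝ (Fin 2)) (a b c R t₁ t₂ t₃ : ℝ)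
    (hABC : AffineIndependent ℝ ![A, B, C])
    (ha : a = dist B C) (hb : b = dist C A) (hc : c = dist A B)
    (hOA : dist O A = R) (hOB : dist O B = R) (hOC : dist O C = R)
    (ht₁ : t₁ ≠ 0) (ht₂ : t₂ ≠ 0) (ht₃ : t₃ ≠ 0)
    (ht : t₁ + t₂ + t₃ ≠ 0)
    (hP : ∀ M : EuclideanSpace ℝ (Fin 2),
      (t₁ + t₂ + t₃) • (P - M) = t₁ • (A - M) + t₂ • (B - M) + t₃ • (C - M)) :
    R ^ 2 - dist O P ^ 2 =
      (t₁ * t₂ * t₃ / (t₁ + t₂ + t₃) ^ 2) * (a ^ 2 / t₁ + b ^ 2 / t₂ + c ^ 2 / t₃) :=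
  stmt_2_general A B C O P a b c R t₁ t₂ t₃ ha hb hc hOA hOB hOC ht₁ ht₂ ht₃ ht hP
end

section
/- Let A, B, C be points of a real inner product space and let P and Q be the barycenters of {A,B,C} with weights (t₁,t₂,t₃) and (u₁,u₂,u₃) respectively, where t := t₁+t₂+t₃ ≠ 0 and u := u₁+u₂+u₃ ≠ 0. Set α = u₁/u − t₁/t, β = u₂/u − t₂/t, γ = u₃/u − t₃/t. Then PQ² = −(βγ·a² + γα·b² + αβ·c²), where a = BC, b = CA, c = AB (when α, β, γ are all nonzero this equals −αβγ·(a²/α + b²/β + c²/γ)). -/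
/-- If `P` and `Q` are the barycenters of `{A, B, C}` with weights `(t₁, t₂, t₃)`
and `(u₁, u₂, u₃)` (with nonzero weight sums `t` and `u`), and
`α = u₁/u − t₁/t`, `β = u₂/u − t₂/t`, `γ = u₃/u − t₃/t`, then
`PQ² = −(βγ·a² + γα·b² + αβ·c²)`. -/
theorem stmt_4 {E : Type*} [NormedAddCommGroup E] [InnerProductSpace ℝ E]
    (A B C P Q : E) (t₁ t₂ t₃ u₁ u₂ u₃ α β γ : ℝ)
    (ht : t₁ + t₂ + t₃ ≠ 0) (hu : u₁ + u₂ + u₃ ≠ 0)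
    (hP : ∀ M : E, (t₁ + t₂ + t₃) • (P - M) = t₁ • (A - M) + t₂ • (B - M) + t₃ • (C - M))
    (hQ : ∀ M : E, (u₁ + u₂ + u₃) • (Q - M) = u₁ • (A - M) + u₂ • (B - M) + u₃ • (C - M))
    (hα : α = u₁ / (u₁ + u₂ + u₃) - t₁ / (t₁ + t₂ + t₃))
    (hβ : β = u₂ / (u₁ + u₂ + u₃) - t₂ / (t₁ + t₂ + t₃))
    (hγ : γ = u₃ / (u₁ + u₂ + u₃) - t₃ / (t₁ + t₂ + t₃)) :
    dist P Q ^ 2 =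
      -(β * γ * dist B C ^ 2 + γ * α * dist C A ^ 2 + α * β * dist A B ^ 2) := by
  have h1 : P - C = (t₁ / (t₁ + t₂ + t₃)) • (A - C) + (t₂ / (t₁ + t₂ + t₃)) • (B - C) := by
    have h := hP C
    simp only [sub_self, smul_zero, add_zero] at h
    rw [div_eq_inv_mul, div_eq_inv_mul, mul_smul, mul_smul, ← smul_add, ← h, inv_smul_smul₀ ht]
  have h2 : Q - C = (u₁ / (u₁ + u₂ + u₃)) • (A - C) + (u₂ / (u₁ + u₂ + u₃)) • (B - C) := by
    have h := hQ C
    simp only [sub_self, smul_zero, add_zero] at h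
    rw [div_eq_inv_mul, div_eq_inv_mul, mul_smul, mul_smul, ← smul_add, ← h, inv_smul_smul₀ hu]
  have hQP : Q - P = α • (A - C) + β • (B - C) := by
    have : Q - P = (Q - C) - (P - C) := by abel
    rw [this, h1, h2, hα, hβ, sub_smul, sub_smul]
    abel
  have hg : γ = -(α + β) := by
    rw [hα, hβ, hγ]; field_simp; ring
  have hd : dist P Q ^ 2 = ‖α • (A - C) + β • (B - C)‖ ^ 2 := by
    rw [dist_comm, dist_eq_norm, hQP]
  rw [hd, hg, dist_eq_norm, dist_eq_norm, dist_eq_norm]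
  have hAB : A - B = (A - C) - (B - C) := by abel
  have hCA : C - A = -(A - C) := by abel
  rw [hAB, hCA, ← real_inner_self_eq_norm_sq, ← real_inner_self_eq_norm_sq,
    ← real_inner_self_eq_norm_sq, ← real_inner_self_eq_norm_sq]
  simp only [inner_add_left, inner_add_right, inner_sub_left, inner_sub_right,
    inner_neg_left, inner_neg_right, real_inner_smul_left, real_inner_smul_right]
  rw [real_inner_comm B A, real_inner_comm C A, real_inner_comm C B]
  ring
end

section
/- Let ABC be a nondegenerate triangle in the Euclidean plane with circumcenter O and circumradius R. Let P and Q be points, both different from O, with barycentric coordinates t₁:t₂:t₃ and u₁:u₂:u₃ respectively, where all tᵢ, uᵢ are nonzero, t := t₁+t₂+t₃ ≠ 0 and u := u₁+u₂+u₃ ≠ 0. Set α = u₁/u − t₁/t, β = u₂/u − t₂/t, γ = u₃/u − t₃/t. Then cos∠POQ = [2R² − (t₁t₂t₃/t²)(a²/t₁ + b²/t₂ + c²/t₃) − (u₁u₂u₃/u²)(a²/u₁ + b²/u₂ + c²/u₃) + (βγ·a² + γα·b² + αβ·c²)] / (2·√[R² − (t₁t₂t₃/t²)(a²/t₁ + b²/t₂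 + c²/t₃)]·√[R² − (u₁u₂u₃/u²)(a²/u₁ + b²/u₂ + c²/u₃)]). -/
open EuclideanGeometry
open scoped RealInnerProductSpace

set_option maxHeartbeats 1600000 in
/-- formula for `cos ∠POQ` in terms of the barycentric coordinates of `P` and `Q`
with respect to a nondegenerate triangle `ABC` with circumcenter `O` and circumradius `R`. -/
theorem stmt_5 (A B C O P Q : EuclideanSpace ℝ (Fin 2)) (a b c R t₁ t₂ t₃ u₁ u₂ u₃ α β γ : ℝ)
    (hABC : AffineIndependent ℝ ![A, B, C])
    (ha : a = dist B C) (hb : b = dist C A) (hc : c = dist A B)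
    (hOA : dist O A = R) (hOB : dist O B = R) (hOC : dist O C = R)
    (ht₁ : t₁ ≠ 0) (ht₂ : t₂ ≠ 0) (ht₃ : t₃ ≠ 0) (ht : t₁ + t₂ + t₃ ≠ 0)
    (hu₁ : u₁ ≠ 0) (hu₂ : u₂ ≠ 0) (hu₃ : u₃ ≠ 0) (hu : u₁ + u₂ + u₃ ≠ 0)
    (hPO : P ≠ O) (hQO : Q ≠ O)
    (hP : ∀ M : EuclideanSpace ℝ (Fin 2),
      (t₁ + t₂ + t₃) • (P - M) = t₁ • (A - M) + t₂ • (B - M) + t₃ • (C - M))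
    (hQ : ∀ M : EuclideanSpace ℝ (Fin 2),
      (u₁ + u₂ + u₃) • (Q - M) = u₁ • (A - M) + u₂ • (B - M) + u₃ • (C - M))
    (hα : α = u₁ / (u₁ + u₂ + u₃) - t₁ / (t₁ + t₂ + t₃))
    (hβ : β = u₂ / (u₁ + u₂ + u₃) - t₂ / (t₁ + t₂ + t₃))
    (hγ : γ = u₃ / (u₁ + u₂ + u₃) - t₃ / (t₁ + t₂ + t₃)) :
    Real.cos (∠ P O Q) =
      (2 * R ^ 2
          - (t₁ * t₂ * t₃ / (t₁ + t₂ + t₃) ^ 2) * (a ^ 2 / t₁ + b ^ 2 / t₂ + c ^ 2 / t₃)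
          - (u₁ * u₂ * u₃ / (u₁ + u₂ + u₃) ^ 2) * (a ^ 2 / u₁ + b ^ 2 / u₂ + c ^ 2 / u₃)
          + (β * γ * a ^ 2 + γ * α * b ^ 2 + α * β * c ^ 2)) /
        (2 * Real.sqrt (R ^ 2 -
              (t₁ * t₂ * t₃ / (t₁ + t₂ + t₃) ^ 2) * (a ^ 2 / t₁ + b ^ 2 / t₂ + c ^ 2 / t₃)) *
            Real.sqrt (R ^ 2 -
              (u₁ * u₂ * u₃ / (u₁ + u₂ + u₃) ^ 2) * (a ^ 2 / u₁ + b ^ 2 / u₂ + c ^ 2 / u₃))) := by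
  
  set X : EuclideanSpace ℝ (Fin 2) := A - O with hX
  set Y : EuclideanSpace ℝ (Fin 2) := B - O with hY
  set Z : EuclideanSpace ℝ (Fin 2) := C - O with hZ
  have hnX : ‖X‖ = R := by rw [hX, ← dist_eq_norm, dist_comm]; exact hOA
  have hnY : ‖Y‖ = R := by rw [hY, ← dist_eq_norm, dist_comm]; exact hOB
  have hnZ : ‖Z‖ = R := by rw [hZ, ← dist_eq_norm, dist_comm]; exact hOC
  have hXX : ⟪X, X⟫ = R ^ 2 := by rw [real_inner_self_eq_norm_sq, hnX]
  have hYY : ⟪Y, Y⟫ = R ^ 2 := by rw [real_inner_self_eq_norm_sq, hnY]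
  have hZZ : ⟪Z, Z⟫ = R ^ 2 := by rw [real_inner_self_eq_norm_sq, hnZ]
  have hXY : ⟪X, Y⟫ = R ^ 2 - c ^ 2 / 2 := by
    have h1 : ‖X - Y‖ = c := by
      rw [hc, dist_eq_norm]; congr 1
      rw [hX, hY]; abel
    have h2 := norm_sub_sq_real X Y
    rw [h1, hnX, hnY] at h2
    linarith
  have hYZ : ⟪Y, Z⟫ = R ^ 2 - a ^ 2 / 2 := by
    have h1 : ‖Y - Z‖ = a := by
      rw [ha, dist_eq_norm]; congr 1
      rw [hY, hZ]; abel
    have h2 := norm_sub_sq_real Y Z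
    rw [h1, hnY, hnZ] at h2
    linarith
  have hXZ : ⟪X, Z⟫ = R ^ 2 - b ^ 2 / 2 := by
    have h1 : ‖X - Z‖ = b := by
      rw [hb, dist_eq_norm, norm_sub_rev]; congr 1
      rw [hX, hZ]; abel
    have h2 := norm_sub_sq_real X Z
    rw [h1, hnX, hnZ] at h2
    linarith
  have hYX : ⟪Y, X⟫ = R ^ 2 - c ^ 2 / 2 := by rw [real_inner_comm]; exact hXY
  have hZY : ⟪Z, Y⟫ = R ^ 2 - a ^ 2 / 2 := by rw [real_inner_comm]; exact hYZ
  have hZX : ⟪Z, X⟫ = R ^ 2 - b ^ 2 / 2 := by rw [real_inner_comm]; exact hXZ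
  have hexp : ∀ s₁ s₂ s₃ v₁ v₂ v₃ : ℝ,
      ⟪s₁ • X + s₂ • Y + s₃ • Z, v₁ • X + v₂ • Y + v₃ • Z⟫ =
        (s₁ * v₁ + s₂ * v₂ + s₃ * v₃) * R ^ 2 + (s₂ * v₃ + s₃ * v₂) * (R ^ 2 - a ^ 2 / 2)
          + (s₁ * v₃ + s₃ * v₁) * (R ^ 2 - b ^ 2 / 2)
          + (s₁ * v₂ + s₂ * v₁) * (R ^ 2 - c ^ 2 / 2) := by
    intro s₁ s₂ s₃ v₁ v₂ v₃
    simp only [inner_add_left, inner_add_right, real_inner_smul_left, real_inner_smul_right,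
      hXX, hYY, hZZ, hXY, hYZ, hXZ, hYX, hZY, hZX]
    ring
  have hPv : (t₁ + t₂ + t₃) • (P - O) = t₁ • X + t₂ • Y + t₃ • Z := hP O
  have hQv : (u₁ + u₂ + u₃) • (Q - O) = u₁ • X + u₂ • Y + u₃ • Z := hQ O
  have hPQ : ((t₁ + t₂ + t₃) * (u₁ + u₂ + u₃)) * ⟪P - O, Q - O⟫ =
      (t₁ * u₁ + t₂ * u₂ + t₃ * u₃) * R ^ 2 + (t₂ * u₃ + t₃ * u₂) * (R ^ 2 - a ^ 2 / 2)
        + (t₁ * u₃ + t₃ * u₁) * (R ^ 2 - b ^ 2 / 2)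
        + (t₁ * u₂ + t₂ * u₁) * (R ^ 2 - c ^ 2 / 2) := by
    rw [← hexp, ← hPv, ← hQv, real_inner_smul_left, real_inner_smul_right]; ring
  have hPP : ((t₁ + t₂ + t₃) * (t₁ + t₂ + t₃)) * ⟪P - O, P - O⟫ =
      (t₁ * t₁ + t₂ * t₂ + t₃ * t₃) * R ^ 2 + (t₂ * t₃ + t₃ * t₂) * (R ^ 2 - a ^ 2 / 2)
        + (t₁ * t₃ + t₃ * t₁) * (R ^ 2 - b ^ 2 / 2)
        + (t₁ * t₂ + t₂ * t₁) * (R ^ 2 - c ^ 2 / 2) := by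
    rw [← hexp, ← hPv, real_inner_smul_left, real_inner_smul_right]; ring
  have hQQ : ((u₁ + u₂ + u₃) * (u₁ + u₂ + u₃)) * ⟪Q - O, Q - O⟫ =
      (u₁ * u₁ + u₂ * u₂ + u₃ * u₃) * R ^ 2 + (u₂ * u₃ + u₃ * u₂) * (R ^ 2 - a ^ 2 / 2)
        + (u₁ * u₃ + u₃ * u₁) * (R ^ 2 - b ^ 2 / 2)
        + (u₁ * u₂ + u₂ * u₁) * (R ^ 2 - c ^ 2 / 2) := by
    rw [← hexp, ← hQv, real_inner_smul_left, real_inner_smul_right]; ring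
  -- treat the three inner products as opaque scalars from now on
  obtain ⟨IP, hIP⟩ : ∃ x : ℝ, ⟪P - O, P - O⟫ = x := ⟨_, rfl⟩
  obtain ⟨IQ, hIQ⟩ : ∃ x : ℝ, ⟪Q - O, Q - O⟫ = x := ⟨_, rfl⟩
  obtain ⟨IPQ, hIPQ⟩ : ∃ x : ℝ, ⟪P - O, Q - O⟫ = x := ⟨_, rfl⟩
  rw [hIP] at hPP
  rw [hIQ] at hQQ
  rw [hIPQ] at hPQ
  have hIPval : IP =
      ((t₁ * t₁ + t₂ * t₂ + t₃ * t₃) * R ^ 2 + (t₂ * t₃ + t₃ * t₂) * (R ^ 2 - a ^ 2 / 2)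
        + (t₁ * t₃ + t₃ * t₁) * (R ^ 2 - b ^ 2 / 2)
        + (t₁ * t₂ + t₂ * t₁) * (R ^ 2 - c ^ 2 / 2)) / ((t₁ + t₂ + t₃) * (t₁ + t₂ + t₃)) := by
    rw [eq_div_iff (mul_ne_zero ht ht)]; linear_combination hPP
  have hIQval : IQ =
      ((u₁ * u₁ + u₂ * u₂ + u₃ * u₃) * R ^ 2 + (u₂ * u₃ + u₃ * u₂) * (R ^ 2 - a ^ 2 / 2)
        + (u₁ * u₃ + u₃ * u₁) * (R ^ 2 - b ^ 2 / 2)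
        + (u₁ * u₂ + u₂ * u₁) * (R ^ 2 - c ^ 2 / 2)) / ((u₁ + u₂ + u₃) * (u₁ + u₂ + u₃)) := by
    rw [eq_div_iff (mul_ne_zero hu hu)]; linear_combination hQQ
  have hIPQval : IPQ =
      ((t₁ * u₁ + t₂ * u₂ + t₃ * u₃) * R ^ 2 + (t₂ * u₃ + t₃ * u₂) * (R ^ 2 - a ^ 2 / 2)
        + (t₁ * u₃ + t₃ * u₁) * (R ^ 2 - b ^ 2 / 2)
        + (t₁ * u₂ + t₂ * u₁) * (R ^ 2 - c ^ 2 / 2)) / ((t₁ + t₂ + t₃) * (u₁ + u₂ + u₃)) := by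
    rw [eq_div_iff (mul_ne_zero ht hu)]; linear_combination hPQ
  have hsqP : Real.sqrt (R ^ 2 -
      (t₁ * t₂ * t₃ / (t₁ + t₂ + t₃) ^ 2) * (a ^ 2 / t₁ + b ^ 2 / t₂ + c ^ 2 / t₃)) = ‖P - O‖ := by
    have harg : R ^ 2 -
        (t₁ * t₂ * t₃ / (t₁ + t₂ + t₃) ^ 2) * (a ^ 2 / t₁ + b ^ 2 / t₂ + c ^ 2 / t₃)
        = ‖P - O‖ ^ 2 := by
      rw [← real_inner_self_eq_norm_sq, hIP, hIPval]
      field_simp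
      ring
    rw [harg, Real.sqrt_sq (norm_nonneg _)]
  have hsqQ : Real.sqrt (R ^ 2 -
      (u₁ * u₂ * u₃ / (u₁ + u₂ + u₃) ^ 2) * (a ^ 2 / u₁ + b ^ 2 / u₂ + c ^ 2 / u₃)) = ‖Q - O‖ := by
    have harg : R ^ 2 -
        (u₁ * u₂ * u₃ / (u₁ + u₂ + u₃) ^ 2) * (a ^ 2 / u₁ + b ^ 2 / u₂ + c ^ 2 / u₃)
        = ‖Q - O‖ ^ 2 := by
      rw [← real_inner_self_eq_norm_sq, hIQ, hIQval]
      field_simp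
      ring
    rw [harg, Real.sqrt_sq (norm_nonneg _)]
  have hangle : ∠ P O Q = InnerProductGeometry.angle (P - O) (Q - O) := by
    rw [EuclideanGeometry.angle, vsub_eq_sub, vsub_eq_sub]
  rw [hangle, InnerProductGeometry.cos_angle, hsqP, hsqQ, hIPQ]
  have hNum : 2 * R ^ 2
      - (t₁ * t₂ * t₃ / (t₁ + t₂ + t₃) ^ 2) * (a ^ 2 / t₁ + b ^ 2 / t₂ + c ^ 2 / t₃)
      - (u₁ * u₂ * u₃ / (u₁ + u₂ + u₃) ^ 2) * (a ^ 2 / u₁ + b ^ 2 / u₂ + c ^ 2 / u₃)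
      + (β * γ * a ^ 2 + γ * α * b ^ 2 + α * β * c ^ 2) = 2 * IPQ := by
    rw [hα, hβ, hγ, hIPQval]
    field_simp
    ring
  rw [hNum, mul_assoc, mul_div_mul_left _ _ (two_ne_zero)]
end

section
/- Let ABC be a nondegenerate, non-equilateral triangle in the Euclidean plane with circumcenter O, circumradius R, inradius r and semiperimeter s; let I be its incenter and N its Nagel point. Then cos∠ION = (2R² + 10Rr − r² − s²)/(2(R−2r)·√(R² − 2Rr)). -/
open EuclideanGeometry

local notation "⟪" x ", " y "⟫" => @inner ℝ _ _ x y

private lemma expand3 (u v w : EuclideanSpace ℝ (Fin 2)) (α β γ δ ε ζ : ℝ) :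
    ⟪α•u+β•v+γ•w, δ•u+ε•v+ζ•w⟫ = α*δ*⟪u,u⟫+β*ε*⟪v,v⟫+γ*ζ*⟪w,w⟫
      +(α*ε+β*δ)*⟪u,v⟫+(α*ζ+γ*δ)*⟪u,w⟫+(β*ζ+γ*ε)*⟪v,w⟫ := by
  simp only [PiLp.inner_apply, Fin.sum_univ_two, RCLike.inner_apply, conj_trivial,
    PiLp.add_apply, PiLp.smul_apply, smul_eq_mul]
  ring

private lemma gram2 (u v w : EuclideanSpace ℝ (Fin 2)) :
    ⟪u,u⟫*⟪v,v⟫*⟪w,w⟫ + 2*(⟪u,v⟫*⟪u,w⟫*⟪v,w⟫) - ⟪u,u⟫*⟪v,w⟫^2 - ⟪v,v⟫*⟪u,w⟫^2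
      - ⟪w,w⟫*⟪u,v⟫^2 = 0 := by
  simp only [PiLp.inner_apply, Fin.sum_univ_two, RCLike.inner_apply, conj_trivial]
  ring

private lemma strict_tri {X Y Z : EuclideanSpace ℝ (Fin 2)}
    (h : ¬ Collinear ℝ ({X, Y, Z} : Set (EuclideanSpace ℝ (Fin 2)))) :
    dist X Z < dist X Y + dist Y Z := by
  rcases eq_or_lt_of_le (dist_triangle X Y Z) with he | h'
  · exact absurd (dist_add_dist_eq_iff.mp he.symm).collinear h
  · exact h'

set_option maxHeartbeats 1000000 in
/-- In a nondegenerate non-equilateral triangle with circumcenter `O`,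
circumradius `R`, inradius `r`, semiperimeter `s`, incenter `I` and Nagel point `N`,
`cos ∠ION = (2R² + 10Rr − r² − s²)/(2(R − 2r)·√(R² − 2Rr))`. -/
theorem stmt_7 (A B C O I N : EuclideanSpace ℝ (Fin 2)) (a b c s S R r : ℝ)
    (hABC : AffineIndependent ℝ ![A, B, C])
    (ha : a = dist B C) (hb : b = dist C A) (hc : c = dist A B)
    (hs : s = (a + b + c) / 2)
    (hS : S = Real.sqrt (s * (s - a) * (s - b) * (s - c)))
    (hr : r = S / s)
    (hOA : dist O A = R) (hOB : dist O B = R) (hOC : dist O C = R)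
    (hI : ∀ M : EuclideanSpace ℝ (Fin 2),
      (a + b + c) • (I - M) = a • (A - M) + b • (B - M) + c • (C - M))
    (hN : ∀ M : EuclideanSpace ℝ (Fin 2),
      ((s - a) + (s - b) + (s - c)) • (N - M) =
        (s - a) • (A - M) + (s - b) • (B - M) + (s - c) • (C - M))
    (hne : ¬(a = b ∧ b = c)) :
    Real.cos (∠ I O N) =
      (2 * R ^ 2 + 10 * R * r - r ^ 2 - s ^ 2) /
        (2 * (R - 2 * r) * Real.sqrt (R ^ 2 - 2 * R * r)) := by
  -- not collinear
  have hncol : ¬ Collinear ℝ ({A, B, C} : Set (EuclideanSpace ℝ (Fin 2))) := by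
    intro h
    apply collinear_iff_not_affineIndependent.mp ?_ hABC
    have hrng : (Set.range ![A, B, C]) = {A, B, C} := by
      ext x
      simp [Matrix.range_cons, Matrix.range_empty]
      tauto
    rwa [hrng]
  -- strict triangle inequalities
  have htri1 : a < b + c := by
    have h : ¬ Collinear ℝ ({B, A, C} : Set (EuclideanSpace ℝ (Fin 2))) := by
      intro h; apply hncol
      have he : ({B, A, C} : Set (EuclideanSpace ℝ (Fin 2))) = {A, B, C} := by ext x; simp; tauto
      rwa [he] at h
    have h2 := strict_tri h
    rw [ha, hb, hc]
    linarith [h2, dist_comm A B, dist_comm B C, dist_comm C A,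
      dist_comm B A, dist_comm C B, dist_comm A C]
  have htri2 : b < a + c := by
    have h : ¬ Collinear ℝ ({C, B, A} : Set (EuclideanSpace ℝ (Fin 2))) := by
      intro h; apply hncol
      have he : ({C, B, A} : Set (EuclideanSpace ℝ (Fin 2))) = {A, B, C} := by ext x; simp; tauto
      rwa [he] at h
    have h2 := strict_tri h
    rw [ha, hb, hc]
    linarith [h2, dist_comm A B, dist_comm B C, dist_comm C A,
      dist_comm B A, dist_comm C B, dist_comm A C]
  have htri3 : c < a + b := by
    have h : ¬ Collinear ℝ ({A, C, B} : Set (EuclideanSpace ℝ (Fin 2))) := by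
      intro h; apply hncol
      have he : ({A, C, B} : Set (EuclideanSpace ℝ (Fin 2))) = {A, B, C} := by ext x; simp; tauto
      rwa [he] at h
    have h2 := strict_tri h
    rw [ha, hb, hc]
    linarith [h2, dist_comm A B, dist_comm B C, dist_comm C A,
      dist_comm B A, dist_comm C B, dist_comm A C]
  have hapos : 0 < a := by linarith
  have hbpos : 0 < b := by linarith
  have hcpos : 0 < c := by linarith
  have hspos : 0 < s := by rw [hs]; linarith
  have hsa : 0 < s - a := by rw [hs]; linarith
  have hsb : 0 < s - b := by rw [hs]; linarith
  have hsc : 0 < s - c := by rw [hs]; linarith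
  have hs_ne : s ≠ 0 := ne_of_gt hspos
  have hsum_ne : a + b + c ≠ 0 := by positivity
  -- R positive
  have hRpos : 0 < R := by
    have h := dist_triangle B O C
    rw [dist_comm B O, hOB, hOC, ← ha] at h
    linarith
  -- Heron
  have hprod : 0 < s * (s - a) * (s - b) * (s - c) := by positivity
  have hS2 : S ^ 2 = s * (s - a) * (s - b) * (s - c) := by
    rw [hS, Real.sq_sqrt hprod.le]
  have hSpos : 0 < S := by rw [hS]; exact Real.sqrt_pos.mpr hprod
  have hrs : r * s = S := by rw [hr]; field_simp
  -- vectors and inner products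
  have hnu : ‖A - O‖ = R := by rw [← dist_eq_norm, dist_comm]; exact hOA
  have hnv : ‖B - O‖ = R := by rw [← dist_eq_norm, dist_comm]; exact hOB
  have hnw : ‖C - O‖ = R := by rw [← dist_eq_norm, dist_comm]; exact hOC
  have huu : ⟪A - O, A - O⟫ = R ^ 2 := by rw [real_inner_self_eq_norm_sq, hnu]
  have hvv : ⟪B - O, B - O⟫ = R ^ 2 := by rw [real_inner_self_eq_norm_sq, hnv]
  have hww : ⟪C - O, C - O⟫ = R ^ 2 := by rw [real_inner_self_eq_norm_sq, hnw]
  have huv : ⟪A - O, B - O⟫ = R ^ 2 - c ^ 2 / 2 := by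
    have hd : ‖(A - O) - (B - O)‖ = c := by
      rw [show (A - O) - (B - O) = A - B by abel, ← dist_eq_norm]; exact hc.symm
    have h := norm_sub_sq_real (A - O) (B - O)
    rw [hnu, hnv, hd] at h
    linarith
  have huw : ⟪A - O, C - O⟫ = R ^ 2 - b ^ 2 / 2 := by
    have hd : ‖(A - O) - (C - O)‖ = b := by
      rw [show (A - O) - (C - O) = A - C by abel, ← dist_eq_norm, dist_comm]; exact hb.symm
    have h := norm_sub_sq_real (A - O) (C - O)
    rw [hnu, hnw, hd] at h
    linarith
  have hvw : ⟪B - O, C - O⟫ = R ^ 2 - a ^ 2 / 2 := by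
    have hd : ‖(B - O) - (C - O)‖ = a := by
      rw [show (B - O) - (C - O) = B - C by abel, ← dist_eq_norm]; exact ha.symm
    have h := norm_sub_sq_real (B - O) (C - O)
    rw [hnv, hnw, hd] at h
    linarith
  -- Gram relation gives abc = 4RS
  have hg := gram2 (A - O) (B - O) (C - O)
  rw [huu, hvv, hww, huv, huw, hvw] at hg
  have hS2' : S ^ 2 = ((a+b+c)/2) * ((a+b+c)/2 - a) * ((a+b+c)/2 - b) * ((a+b+c)/2 - c) := by
    rw [← hs]; exact hS2
  have h16 : (a * b * c) ^ 2 = (4 * R * S) ^ 2 := by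
    linear_combination (-4) * hg - 16 * R ^ 2 * hS2'
  have habc : a * b * c = 4 * R * S := by
    have h0 : (a * b * c - 4 * R * S) * (a * b * c + 4 * R * S) = 0 := by
      linear_combination h16
    rcases mul_eq_zero.mp h0 with h | h
    · linarith
    · exfalso
      have hp : 0 < a * b * c + 4 * R * S := by positivity
      linarith
  have hs2 : a + b + c = 2 * s := by rw [hs]; ring
  -- incenter vector
  have hIOv := hI O
  have e1 : ⟪(a+b+c) • (I - O), (a+b+c) • (I - O)⟫
      = ⟪a • (A-O) + b • (B-O) + c • (C-O), a • (A-O) + b • (B-O) + c • (C-O)⟫ := by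
    rw [hIOv]
  rw [real_inner_smul_left, real_inner_smul_right, expand3, huu, hvv, hww, huv, huw, hvw,
    real_inner_self_eq_norm_sq] at e1
  -- Nagel vector
  have hsum3 : (s - a) + (s - b) + (s - c) = s := by rw [hs]; ring
  have hNOv := hN O
  rw [hsum3] at hNOv
  have e2 : ⟪s • (N - O), s • (N - O)⟫
      = ⟪(s-a) • (A-O) + (s-b) • (B-O) + (s-c) • (C-O),
         (s-a) • (A-O) + (s-b) • (B-O) + (s-c) • (C-O)⟫ := by
    rw [hNOv]
  rw [real_inner_smul_left, real_inner_smul_right, expand3, huu, hvv, hww, huv, huw, hvw,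
    real_inner_self_eq_norm_sq] at e2
  -- mixed
  have e3 : ⟪(a+b+c) • (I - O), s • (N - O)⟫
      = ⟪a • (A-O) + b • (B-O) + c • (C-O),
         (s-a) • (A-O) + (s-b) • (B-O) + (s-c) • (C-O)⟫ := by
    rw [hIOv, hNOv]
  rw [real_inner_smul_left, real_inner_smul_right, expand3, huu, hvv, hww, huv, huw, hvw] at e3
  -- key scalar facts
  have h2Rr : 2 * R * r * (a + b + c) = a * b * c := by
    linear_combination 2 * R * r * hs2 + 4 * R * hrs - habc
  have key1 : ‖I - O‖ ^ 2 = R ^ 2 - 2 * R * r := by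
    have h1 : (a+b+c) * ((a+b+c) * ‖I - O‖ ^ 2) = (a+b+c) * ((a+b+c) * (R ^ 2 - 2 * R * r)) := by
      linear_combination e1 + (a+b+c) * h2Rr
    exact mul_left_cancel₀ hsum_ne (mul_left_cancel₀ hsum_ne h1)
  have I1 : (s-a)*(s-b)*c^2 + (s-b)*(s-c)*a^2 + (s-a)*(s-c)*b^2
      = s*(a*b*c) - 4*(s*(s-a)*(s-b)*(s-c)) := by
    rw [hs]; ring
  have h4S : 4*R*r*s^2 = s*(a*b*c) := by
    linear_combination 4*R*s*hrs - s*habc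
  have h4S2 : 4*(r*s)^2 = 4*(s*(s-a)*(s-b)*(s-c)) := by
    rw [hrs]; linear_combination 4*hS2
  have key2 : ‖N - O‖ ^ 2 = (R - 2*r) ^ 2 := by
    have h1 : s * (s * ‖N - O‖ ^ 2) = s * (s * (R - 2*r) ^ 2) := by
      linear_combination e2 - I1 + h4S - h4S2 - R^2*(4*s-(a+b+c))*hs2
    exact mul_left_cancel₀ hs_ne (mul_left_cancel₀ hs_ne h1)
  have I2 : ((a*(s-b)+b*(s-a))*c^2 + (b*(s-c)+c*(s-b))*a^2 + (a*(s-c)+c*(s-a))*b^2)/2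
      = -(5/2)*(s*(a*b*c)) + s*(s-a)*(s-b)*(s-c) + s^4 := by
    rw [hs]; ring
  have key3 : ⟪I - O, N - O⟫ = (2*R^2 + 10*R*r - r^2 - s^2)/2 := by
    have h1 : 2*s * (s * ⟪I - O, N - O⟫) = 2*s * (s * ((2*R^2 + 10*R*r - r^2 - s^2)/2)) := by
      linear_combination e3 - (s * ⟪I - O, N - O⟫ + R^2*(a+b+c-s)) * hs2 - I2
        - (5/2)*h4S + (1/4)*h4S2
    have h2 := mul_left_cancel₀ (by positivity : (2*s : ℝ) ≠ 0) h1
    exact mul_left_cancel₀ hs_ne h2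
  -- finish
  have hR2r : 0 ≤ R - 2*r := by
    have h0 : 0 ≤ R ^ 2 - 2 * R * r := key1 ▸ sq_nonneg _
    by_contra hlt
    push_neg at hlt
    have hneg : R * (R - 2*r) < 0 := mul_neg_of_pos_of_neg hRpos (by linarith)
    have heq : R * (R - 2*r) = R ^ 2 - 2 * R * r := by ring
    linarith
  have hIOn : ‖I - O‖ = Real.sqrt (R ^ 2 - 2 * R * r) := by
    rw [← key1, Real.sqrt_sq (norm_nonneg _)]
  have hNOn : ‖N - O‖ = R - 2 * r := by
    have h1 : ‖N - O‖ = Real.sqrt ((R - 2*r) ^ 2) := by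
      rw [← key2, Real.sqrt_sq (norm_nonneg _)]
    rw [h1, Real.sqrt_sq hR2r]
  have hcos : Real.cos (∠ I O N) = ⟪I - O, N - O⟫ / (‖I - O‖ * ‖N - O‖) := by
    rw [EuclideanGeometry.angle, InnerProductGeometry.cos_angle]
    simp [vsub_eq_sub]
  rw [hcos, key3, hIOn, hNOn]
  rcases eq_or_lt_of_le hR2r with h0 | h0
  · have hX : R ^ 2 - 2 * R * r = 0 := by
      have heq : R ^ 2 - 2 * R * r = R * (R - 2 * r) := by ring
      rw [heq, ← h0, mul_zero]
    rw [hX, Real.sqrt_zero]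
    simp
  · have hXpos : 0 < R ^ 2 - 2 * R * r := by
      have heq : R ^ 2 - 2 * R * r = R * (R - 2 * r) := by ring
      rw [heq]; exact mul_pos hRpos h0
    have hsqrt_ne : Real.sqrt (R ^ 2 - 2 * R * r) ≠ 0 := ne_of_gt (Real.sqrt_pos.mpr hXpos)
    have hd : R - 2 * r ≠ 0 := ne_of_gt h0
    have hsq : 0 < Real.sqrt (R ^ 2 - 2 * R * r) := Real.sqrt_pos.mpr hXpos
    rw [div_eq_div_iff (by positivity) (by positivity)]
    ring
end

section
/- In any nondegenerate triangle with semiperimeter s, circumradius R and inradius r, the distance between the incenter I and the Nagel point N satisfies IN² = s² + 5r² − 16Rr. -/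
set_option maxHeartbeats 1000000

local notation "⟪" x ", " y "⟫_ℝ" => @inner ℝ _ _ x y

/-- in any nondegenerate triangle with semiperimeter `s`, circumradius `R`
and inradius `r`, the incenter `I` and the Nagel point `N` satisfy
`IN² = s² + 5r² − 16Rr`. -/
theorem stmt_9 (A B C O I N : EuclideanSpace ℝ (Fin 2)) (a b c s S R r : ℝ)
    (hABC : AffineIndependent ℝ ![A, B, C])
    (ha : a = dist B C) (hb : b = dist C A) (hc : c = dist A B)
    (hs : s = (a + b + c) / 2)
    (hS : S = Real.sqrt (s * (s - a) * (s - b) * (s - c)))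
    (hr : r = S / s)
    (hOA : dist O A = R) (hOB : dist O B = R) (hOC : dist O C = R)
    (hI : ∀ M : EuclideanSpace ℝ (Fin 2),
      (a + b + c) • (I - M) = a • (A - M) + b • (B - M) + c • (C - M))
    (hN : ∀ M : EuclideanSpace ℝ (Fin 2),
      ((s - a) + (s - b) + (s - c)) • (N - M) =
        (s - a) • (A - M) + (s - b) • (B - M) + (s - c) • (C - M)) :
    dist I N ^ 2 = s ^ 2 + 5 * r ^ 2 - 16 * R * r := by
  -- strict triangle inequalities
  have hcol : ¬ Collinear ℝ ({A, B, C} : Set (EuclideanSpace ℝ (Fin 2))) :=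
    affineIndependent_iff_not_collinear_set.mp hABC
  have tri1 : dist C A < dist A B + dist B C := by
    rw [dist_comm C A]
    rcases lt_or_eq_of_le (dist_triangle A B C) with h | h
    · exact h
    · exact absurd (dist_add_dist_eq_iff.mp h.symm).collinear hcol
  have tri2 : dist B C < dist B A + dist A C := by
    rcases lt_or_eq_of_le (dist_triangle B A C) with h | h
    · exact h
    · refine absurd (dist_add_dist_eq_iff.mp h.symm).collinear fun hcl => hcol ?_
      have hset : ({B, A, C} : Set (EuclideanSpace ℝ (Fin 2))) = {A, B, C} := by
        ext x; simp; tauto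
      rwa [hset] at hcl
  have tri3 : dist A B < dist A C + dist C B := by
    rcases lt_or_eq_of_le (dist_triangle A C B) with h | h
    · exact h
    · refine absurd (dist_add_dist_eq_iff.mp h.symm).collinear fun hcl => hcol ?_
      have hset : ({A, C, B} : Set (EuclideanSpace ℝ (Fin 2))) = {A, B, C} := by
        ext x; simp; tauto
      rwa [hset] at hcl
  rw [dist_comm B A, dist_comm A C] at tri2
  rw [dist_comm A C, dist_comm C B] at tri3
  have h1 : 0 < -a + b + c := by rw [ha, hb, hc]; linarith
  have h2 : 0 < a - b + c := by rw [ha, hb, hc]; linarith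
  have h3 : 0 < a + b - c := by rw [ha, hb, hc]; linarith
  have hapos : 0 < a := by linarith
  have hbpos : 0 < b := by linarith
  have hcpos : 0 < c := by linarith
  subst hs hr
  -- area facts
  have hprod : 0 < (a + b + c) / 2 * ((a + b + c) / 2 - a) * ((a + b + c) / 2 - b) *
      ((a + b + c) / 2 - c) := by
    apply mul_pos (mul_pos (mul_pos (by linarith) (by linarith)) (by linarith)); linarith
  have hS2 : S ^ 2 = (a + b + c) / 2 * ((a + b + c) / 2 - a) * ((a + b + c) / 2 - b) *
      ((a + b + c) / 2 - c) := by rw [hS]; exact Real.sq_sqrt hprod.le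
  have hSpos : 0 < S := by rw [hS]; exact Real.sqrt_pos.mpr hprod
  have hRpos : 0 ≤ R := hOA ▸ dist_nonneg
  -- circumcenter vectors
  set u : EuclideanSpace ℝ (Fin 2) := A - O with hudef
  set v : EuclideanSpace ℝ (Fin 2) := B - O with hvdef
  set w : EuclideanSpace ℝ (Fin 2) := C - O with hwdef
  have hnu : ‖u‖ = R := by rw [hudef, ← dist_eq_norm, dist_comm]; exact hOA
  have hnv : ‖v‖ = R := by rw [hvdef, ← dist_eq_norm, dist_comm]; exact hOB
  have hnw : ‖w‖ = R := by rw [hwdef, ← dist_eq_norm, dist_comm]; exact hOC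
  have hu : ⟪u, u⟫_ℝ = R ^ 2 := by rw [real_inner_self_eq_norm_sq, hnu]
  have hv : ⟪v, v⟫_ℝ = R ^ 2 := by rw [real_inner_self_eq_norm_sq, hnv]
  have hw : ⟪w, w⟫_ℝ = R ^ 2 := by rw [real_inner_self_eq_norm_sq, hnw]
  have huvn : ‖u - v‖ = c := by
    rw [hudef, hvdef, show A - O - (B - O) = A - B by abel, ← dist_eq_norm, hc]
  have huwn : ‖u - w‖ = b := by
    rw [hudef, hwdef, show A - O - (C - O) = A - C by abel, ← dist_eq_norm, dist_comm, hb]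
  have hvwn : ‖v - w‖ = a := by
    rw [hvdef, hwdef, show B - O - (C - O) = B - C by abel, ← dist_eq_norm, ha]
  have huv : ⟪u, v⟫_ℝ = R ^ 2 - c ^ 2 / 2 := by
    have := norm_sub_sq_real u v; rw [huvn, hnu, hnv] at this; linarith
  have huw : ⟪u, w⟫_ℝ = R ^ 2 - b ^ 2 / 2 := by
    have := norm_sub_sq_real u w; rw [huwn, hnu, hnw] at this; linarith
  have hvw : ⟪v, w⟫_ℝ = R ^ 2 - a ^ 2 / 2 := by
    have := norm_sub_sq_real v w; rw [hvwn, hnv, hnw] at this; linarith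
  have hvu : ⟪v, u⟫_ℝ = R ^ 2 - c ^ 2 / 2 := (real_inner_comm u v).trans huv
  have hwu : ⟪w, u⟫_ℝ = R ^ 2 - b ^ 2 / 2 := (real_inner_comm u w).trans huw
  have hwv : ⟪w, v⟫_ℝ = R ^ 2 - a ^ 2 / 2 := (real_inner_comm v w).trans hvw
  -- linear dependence gives the circumradius relation 16 S² R² = a²b²c²
  have hnli : ¬ LinearIndependent ℝ ![u, v, w] := by
    intro h
    have h2 := h.fintype_card_le_finrank
    rw [finrank_euclideanSpace_fin] at h2
    simp at h2
  obtain ⟨g, hg, i, hgi⟩ := Fintype.not_linearIndependent_iff.mp hnli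
  rw [Fin.sum_univ_three] at hg
  simp only [Matrix.cons_val_zero, Matrix.cons_val_one, Matrix.head_cons,
    Matrix.cons_val_two, Matrix.tail_cons] at hg
  have keyg : ∀ z : EuclideanSpace ℝ (Fin 2),
      g 0 * ⟪u, z⟫_ℝ + g 1 * ⟪v, z⟫_ℝ + g 2 * ⟪w, z⟫_ℝ = 0 := by
    intro z
    have h3 := congrArg (fun y => ⟪y, z⟫_ℝ) hg
    simp only [inner_add_left, real_inner_smul_left, inner_zero_left] at h3
    linear_combination h3
  have e1 := keyg u; have e2 := keyg v; have e3 := keyg w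
  rw [hu, hvu, hwu] at e1
  rw [huv, hv, hwv] at e2
  rw [huw, hvw, hw] at e3
  set x := R ^ 2 with hx
  have hD0 : ((2*(a^2*b^2+b^2*c^2+c^2*a^2) - a^4 - b^4 - c^4) * x - a^2*b^2*c^2) * g 0 = 0 := by
    linear_combination (4*(x^2-(x-a^2/2)^2)) * e1 + (4*((x-a^2/2)*(x-b^2/2)-(x-c^2/2)*x)) * e2
      + (4*((x-c^2/2)*(x-a^2/2)-x*(x-b^2/2))) * e3
  have hD1 : ((2*(a^2*b^2+b^2*c^2+c^2*a^2) - a^4 - b^4 - c^4) * x - a^2*b^2*c^2) * g 1 = 0 := by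
    linear_combination (4*((x-a^2/2)*(x-b^2/2)-(x-c^2/2)*x)) * e1 + (4*(x^2-(x-b^2/2)^2)) * e2
      + (4*((x-c^2/2)*(x-b^2/2)-x*(x-a^2/2))) * e3
  have hD2 : ((2*(a^2*b^2+b^2*c^2+c^2*a^2) - a^4 - b^4 - c^4) * x - a^2*b^2*c^2) * g 2 = 0 := by
    linear_combination (4*((x-c^2/2)*(x-a^2/2)-x*(x-b^2/2))) * e1
      + (4*((x-c^2/2)*(x-b^2/2)-x*(x-a^2/2))) * e2 + (4*(x^2-(x-c^2/2)^2)) * e3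
  have hDz : (2*(a^2*b^2+b^2*c^2+c^2*a^2) - a^4 - b^4 - c^4) * x - a^2*b^2*c^2 = 0 := by
    fin_cases i
    · exact (mul_eq_zero.mp hD0).resolve_right hgi
    · exact (mul_eq_zero.mp hD1).resolve_right hgi
    · exact (mul_eq_zero.mp hD2).resolve_right hgi
  have h16 : 16 * S ^ 2 * R ^ 2 = a ^ 2 * b ^ 2 * c ^ 2 := by
    linear_combination hDz + 16 * R ^ 2 * hS2
  have hSR : 4 * (S * R) = a * b * c := by
    have hfac : (4 * (S * R) - a * b * c) * (4 * (S * R) + a * b * c) = 0 := by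
      linear_combination h16
    rcases mul_eq_zero.mp hfac with h | h
    · linarith
    · have habc' : 0 < a * b * c := by positivity
      have hsr' : 0 ≤ S * R := mul_nonneg hSpos.le hRpos
      linarith
  -- the vector I - N
  have hIO := hI O
  have hNO := hN O
  have key : (a + b + c) • (I - N) = (2*a-b-c) • u + (2*b-a-c) • v + (2*c-a-b) • w := by
    rw [hudef, hvdef, hwdef]
    linear_combination (norm := module) hIO - (2:ℝ) • hNO
  -- squared norm
  have hsq := congrArg (fun z : EuclideanSpace ℝ (Fin 2) => ⟪z, z⟫_ℝ) key
  simp only [inner_add_left, inner_add_right, real_inner_smul_left, real_inner_smul_right,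
    hu, hv, hw, huv, huw, hvw, hvu, hwu, hwv, real_inner_self_eq_norm_sq] at hsq
  simp only [norm_smul, Real.norm_eq_abs, mul_pow, sq_abs, hnu, hnv, hnw] at hsq
  rw [← dist_eq_norm] at hsq
  -- final algebra
  have habc : (a + b + c) ≠ 0 := by positivity
  have main : (a + b + c) ^ 2 * dist I N ^ 2
      = (a + b + c) ^ 4 / 4 + 20 * S ^ 2 - 8 * (a * b * c) * (a + b + c) := by
    linear_combination hsq - 20 * hS2
  have hexp : (((a+b+c)/2)^2 + 5*(S/((a+b+c)/2))^2 - 16*R*(S/((a+b+c)/2))) * (a+b+c)^2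
      = (a+b+c)^4/4 + 20*S^2 - 32*(S*R)*(a+b+c) := by
    field_simp
    ring
  have goal' : dist I N ^ 2 * (a+b+c)^2
      = (((a+b+c)/2)^2 + 5*(S/((a+b+c)/2))^2 - 16*R*(S/((a+b+c)/2))) * (a+b+c)^2 := by
    rw [hexp]
    linear_combination main + 8*(a+b+c)*hSR
  exact mul_right_cancel₀ (pow_ne_zero 2 habc) goal'
end

section
/- In any nondegenerate triangle with circumcenter O, circumradius R and inradius r, the distance from O to the Nagel point N satisfies ON² = R² − 4Rr + 4r² = (R − 2r)². -/
/-!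
If `O` is at distance `R` from `A`, `B`, `C` and
`W • (P - O) = wA • (A - O) + wB • (B - O) + wC • (C - O)` with `W = wA + wB + wC`,
expanding `‖W • (P - O)‖²` and polarizing gives
`W² OP² = W² R² - (wA wB c² + wB wC a² + wC wA b²)`.
For the Nagel weights `s - a, s - b, s - c` (so `W = s`) the subtracted sum is `s abc - 4S²`, and
`abc = 4RS` because the Gram determinant of `OA, OB, OC` vanishes in the plane.
Dividing by `s²` gives `ON² = R² - 4R(S/s) + 4(S/s)²`.
-/

open RealInnerProductSpace

section InnerProductSpace

variable {V : Type*} [NormedAddCommGroup V] [InnerProductSpace ℝ V]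

theorem inner_sub_sub_of_dist_eq {X Y O : V} {R : ℝ} (hX : dist O X = R) (hY : dist O Y = R) :
    ⟪X - O, Y - O⟫ = R ^ 2 - dist X Y ^ 2 / 2 := by
  have h := norm_sub_sq_real (X - O) (Y - O)
  rw [sub_sub_sub_cancel_right, ← dist_eq_norm, ← dist_eq_norm, ← dist_eq_norm, dist_comm X O,
    dist_comm Y O, hX, hY] at h
  linear_combination h / 2

theorem sq_sum_mul_dist_sq_of_smul_sub_eq {A B C O P : V} {R wA wB wC : ℝ}
    (hA : dist O A = R) (hB : dist O B = R) (hC : dist O C = R)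
    (hP : (wA + wB + wC) • (P - O) = wA • (A - O) + wB • (B - O) + wC • (C - O)) :
    (wA + wB + wC) ^ 2 * dist O P ^ 2 = (wA + wB + wC) ^ 2 * R ^ 2
      - (wA * wB * dist A B ^ 2 + wB * wC * dist B C ^ 2 + wC * wA * dist C A ^ 2) := by
  have h := congrArg (fun x => ⟪x, x⟫) hP
  simp only [inner_add_left, inner_add_right, real_inner_smul_left, real_inner_smul_right,
    inner_sub_sub_of_dist_eq (O := O) (R := R), hA, hB, hC, dist_self] at h
  rw [real_inner_self_eq_norm_sq, ← dist_eq_norm] at h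
  simp only [dist_comm] at h ⊢
  linear_combination h

end InnerProductSpace

theorem EuclideanSpace.fin_two_gram_det_eq_zero (u v w : EuclideanSpace ℝ (Fin 2)) :
    ‖u‖ ^ 2 * ‖v‖ ^ 2 * ‖w‖ ^ 2 + 2 * ⟪u, v⟫ * ⟪v, w⟫ * ⟪w, u⟫
      - ‖u‖ ^ 2 * ⟪v, w⟫ ^ 2 - ‖v‖ ^ 2 * ⟪w, u⟫ ^ 2 - ‖w‖ ^ 2 * ⟪u, v⟫ ^ 2 = 0 := by
  simp only [EuclideanSpace.norm_sq_eq, EuclideanSpace.inner_eq_star_dotProduct, dotProduct,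
    Fin.sum_univ_two, Real.norm_eq_abs, sq_abs, star_trivial]
  ring

theorem dist_mul_dist_mul_dist_sq_of_dist_eq {A B C O : EuclideanSpace ℝ (Fin 2)} {R : ℝ}
    (hA : dist O A = R) (hB : dist O B = R) (hC : dist O C = R) :
    (dist B C * dist C A * dist A B) ^ 2 = R ^ 2 * (2 * dist B C ^ 2 * dist C A ^ 2
      + 2 * dist C A ^ 2 * dist A B ^ 2 + 2 * dist A B ^ 2 * dist B C ^ 2
      - dist B C ^ 4 - dist C A ^ 4 - dist A B ^ 4) := by
  have hG := EuclideanSpace.fin_two_gram_det_eq_zero (A - O) (B - O) (C - O)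
  rw [← dist_eq_norm, ← dist_eq_norm, ← dist_eq_norm, dist_comm A, dist_comm B, dist_comm C,
    hA, hB, hC, inner_sub_sub_of_dist_eq hA hB, inner_sub_sub_of_dist_eq hB hC,
    inner_sub_sub_of_dist_eq hC hA] at hG
  linear_combination (-4) * hG

theorem dist_le_half_perimeter {P : Type*} [PseudoMetricSpace P] (A B C : P) :
    dist B C ≤ (dist B C + dist C A + dist A B) / 2 := by
  linarith [dist_triangle B A C, dist_comm A B, dist_comm A C]

/-- in any nondegenerate triangle with circumcenter `O`, circumradius `R`
and inradius `r`, the Nagel point `N` satisfies `ON² = R² − 4Rr + 4r² = (R − 2r)²`. -/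
theorem stmt_10 (A B C O N : EuclideanSpace ℝ (Fin 2)) (a b c s S R r : ℝ)
    (hABC : AffineIndependent ℝ ![A, B, C])
    (ha : a = dist B C) (hb : b = dist C A) (hc : c = dist A B)
    (hs : s = (a + b + c) / 2)
    (hS : S = Real.sqrt (s * (s - a) * (s - b) * (s - c)))
    (hr : r = S / s)
    (hOA : dist O A = R) (hOB : dist O B = R) (hOC : dist O C = R)
    (hN : ∀ M : EuclideanSpace ℝ (Fin 2),
      ((s - a) + (s - b) + (s - c)) • (N - M) =
        (s - a) • (A - M) + (s - b) • (B - M) + (s - c) • (C - M)) :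
    dist O N ^ 2 = R ^ 2 - 4 * R * r + 4 * r ^ 2 ∧ dist O N ^ 2 = (R - 2 * r) ^ 2 := by
  have hBC : B ≠ C := by simpa using hABC.injective.ne (show (1 : Fin 3) ≠ 2 by decide)
  have hs_pos : 0 < s := by
    have := dist_pos.2 hBC
    rw [hs, ha, hb, hc]; positivity
  have hS2 : S ^ 2 = s * (s - a) * (s - b) * (s - c) := by
    have hsa : 0 ≤ s - a := by rw [hs, ha, hb, hc]; linarith [dist_le_half_perimeter A B C]
    have hsb : 0 ≤ s - b := by rw [hs, ha, hb, hc]; linarith [dist_le_half_perimeter B C A]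
    have hsc : 0 ≤ s - c := by rw [hs, ha, hb, hc]; linarith [dist_le_half_perimeter C A B]
    rw [hS, Real.sq_sqrt (by positivity)]
  have heron : 16 * (s * (s - a) * (s - b) * (s - c))
      = 2 * a ^ 2 * b ^ 2 + 2 * b ^ 2 * c ^ 2 + 2 * c ^ 2 * a ^ 2 - a ^ 4 - b ^ 4 - c ^ 4 := by
    rw [hs]; ring
  have habc : a * b * c = 4 * R * S := by
    have h := dist_mul_dist_mul_dist_sq_of_dist_eq hOA hOB hOC
    rw [← ha, ← hb, ← hc] at h
    have hR : 0 ≤ R := hOA ▸ dist_nonneg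
    have hS0 : 0 ≤ S := hS ▸ Real.sqrt_nonneg _
    refine (pow_left_inj₀ (by rw [ha, hb, hc]; positivity) (by positivity) two_ne_zero).1 ?_
    linear_combination h - R ^ 2 * heron - 16 * R ^ 2 * hS2
  have hsum : (s - a) + (s - b) + (s - c) = s := by rw [hs]; ring
  have hQ : (s - a) * (s - b) * c ^ 2 + (s - b) * (s - c) * a ^ 2 + (s - c) * (s - a) * b ^ 2
      = s * (a * b * c) - 4 * (s * (s - a) * (s - b) * (s - c)) := by
    rw [hs]; ring
  have hON := sq_sum_mul_dist_sq_of_smul_sub_eq hOA hOB hOC (hN O)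
  rw [hsum, ← ha, ← hb, ← hc] at hON
  have hdist : dist O N ^ 2 = R ^ 2 - 4 * R * r + 4 * r ^ 2 := by
    rw [hr]
    field_simp
    linear_combination hON - hQ - s * habc - 4 * hS2
  exact ⟨hdist, by rw [hdist]; ring⟩
end

section
/- Let ABC be a nondegenerate triangle in the Euclidean plane with circumcenter O, circumradius R, semiperimeter s and exradius rₐ opposite to A. Let Iₐ be the excenter opposite A (barycentric coordinates −a:b:c) and Nₐ the adjoint Nagel point (barycentric coordinates s:(c−s):(b−s)). Then cos∠IₐONₐ = (R² − 3Rrₐ − rₐ² − (a²+b²+c²)/4)/((R + 2rₐ)·√(R² + 2Rrₐ)). -/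
open EuclideanGeometry

open scoped RealInnerProductSpace

set_option maxHeartbeats 1000000 in
/-- in a nondegenerate triangle with circumcenter `O`, circumradius `R`,
semiperimeter `s` and exradius `rₐ` opposite `A`, the excenter `Iₐ` (barycentrics `−a:b:c`)
and adjoint Nagel point `Nₐ` (barycentrics `s:(c−s):(b−s)`) satisfy
`cos ∠IₐONₐ = (R² − 3Rrₐ − rₐ² − (a²+b²+c²)/4)/((R + 2rₐ)·√(R² + 2Rrₐ))`. -/
theorem stmt_11 (A B C O Ia Na : EuclideanSpace ℝ (Fin 2)) (a b c s S R ra : ℝ)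
    (hABC : AffineIndependent ℝ ![A, B, C])
    (ha : a = dist B C) (hb : b = dist C A) (hc : c = dist A B)
    (hs : s = (a + b + c) / 2)
    (hS : S = Real.sqrt (s * (s - a) * (s - b) * (s - c)))
    (hra : ra = S / (s - a))
    (hOA : dist O A = R) (hOB : dist O B = R) (hOC : dist O C = R)
    (hIa : ∀ M : EuclideanSpace ℝ (Fin 2),
      (-a + b + c) • (Ia - M) = (-a) • (A - M) + b • (B - M) + c • (C - M))
    (hNa : ∀ M : EuclideanSpace ℝ (Fin 2),
      (s + (c - s) + (b - s)) • (Na - M) =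
        s • (A - M) + (c - s) • (B - M) + (b - s) • (C - M)) :
    Real.cos (∠ Ia O Na) =
      (R ^ 2 - 3 * R * ra - ra ^ 2 - (a ^ 2 + b ^ 2 + c ^ 2) / 4) /
        ((R + 2 * ra) * Real.sqrt (R ^ 2 + 2 * R * ra)) := by
  -- distinct vertices
  have hAB : A ≠ B := by
    intro h
    exact (by decide : ¬ ((0 : Fin 3) = 1)) (hABC.injective (by simpa using h))
  have hBC : B ≠ C := by
    intro h
    exact (by decide : ¬ ((1 : Fin 3) = 2)) (hABC.injective (by simpa using h))
  have hCA : C ≠ A := by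
    intro h
    exact (by decide : ¬ ((2 : Fin 3) = 0)) (hABC.injective (by simpa using h))
  have hapos : 0 < a := ha ▸ dist_pos.2 hBC
  have hbpos : 0 < b := hb ▸ dist_pos.2 hCA
  have hcpos : 0 < c := hc ▸ dist_pos.2 hAB
  have hRnn : 0 ≤ R := hOA ▸ dist_nonneg
  have hRpos : 0 < R := by
    rcases hRnn.lt_or_eq with h | h
    · exact h
    · exfalso
      apply hAB
      have h1 : dist O A = 0 := by rw [hOA, ← h]
      have h2 : dist O B = 0 := by rw [hOB, ← h]
      rw [dist_eq_zero] at h1 h2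
      rw [← h1, ← h2]
  -- inner products between vertex vectors
  have hnA : ‖A - O‖ = R := by rw [← dist_eq_norm, dist_comm]; exact hOA
  have hnB : ‖B - O‖ = R := by rw [← dist_eq_norm, dist_comm]; exact hOB
  have hnC : ‖C - O‖ = R := by rw [← dist_eq_norm, dist_comm]; exact hOC
  have hUU : ⟪A - O, A - O⟫ = R ^ 2 := by rw [real_inner_self_eq_norm_sq, hnA]
  have hVV : ⟪B - O, B - O⟫ = R ^ 2 := by rw [real_inner_self_eq_norm_sq, hnB]
  have hWW : ⟪C - O, C - O⟫ = R ^ 2 := by rw [real_inner_self_eq_norm_sq, hnC]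
  have inner_pair : ∀ (X Y : EuclideanSpace ℝ (Fin 2)) (d : ℝ), ‖X - O‖ = R → ‖Y - O‖ = R →
      d = dist X Y → ⟪X - O, Y - O⟫ = R ^ 2 - d ^ 2 / 2 := by
    intro X Y d hX hY hd
    have h3 : ‖(X - O) - (Y - O)‖ = d := by
      rw [sub_sub_sub_cancel_right, ← dist_eq_norm, hd]
    have h4 := norm_sub_sq_real (X - O) (Y - O)
    rw [hX, hY, h3] at h4
    linarith
  have hUV : ⟪A - O, B - O⟫ = R ^ 2 - c ^ 2 / 2 := inner_pair A B c hnA hnB hc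
  have hUW : ⟪A - O, C - O⟫ = R ^ 2 - b ^ 2 / 2 :=
    inner_pair A C b hnA hnC (by rw [hb, dist_comm])
  have hVW : ⟪B - O, C - O⟫ = R ^ 2 - a ^ 2 / 2 := inner_pair B C a hnB hnC ha
  have hVU : ⟪B - O, A - O⟫ = R ^ 2 - c ^ 2 / 2 := by rw [real_inner_comm]; exact hUV
  have hWU : ⟪C - O, A - O⟫ = R ^ 2 - b ^ 2 / 2 := by rw [real_inner_comm]; exact hUW
  have hWV : ⟪C - O, B - O⟫ = R ^ 2 - a ^ 2 / 2 := by rw [real_inner_comm]; exact hVW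
  -- Gram determinant relation: 16 R² S'² = a²b²c²
  have hdep : ¬ LinearIndependent ℝ ![A - O, B - O, C - O] := by
    intro h
    have := h.fintype_card_le_finrank
    simp [finrank_euclideanSpace_fin] at this
  obtain ⟨g, hg, i, hi⟩ := Fintype.not_linearIndependent_iff.mp hdep
  have hgsum : g 0 • (A - O) + g 1 • (B - O) + g 2 • (C - O) = 0 := by
    simpa [Fin.sum_univ_three] using hg
  have e0 : g 0 * R ^ 2 + g 1 * (R ^ 2 - c ^ 2 / 2) + g 2 * (R ^ 2 - b ^ 2 / 2) = 0 := by
    have h := congrArg (fun z => ⟪A - O, z⟫) hgsum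
    simp only [inner_add_right, real_inner_smul_right, hUU, hUV, hUW, inner_zero_right] at h
    linarith
  have e1 : g 0 * (R ^ 2 - c ^ 2 / 2) + g 1 * R ^ 2 + g 2 * (R ^ 2 - a ^ 2 / 2) = 0 := by
    have h := congrArg (fun z => ⟪B - O, z⟫) hgsum
    simp only [inner_add_right, real_inner_smul_right, hVU, hVV, hVW, inner_zero_right] at h
    linarith
  have e2 : g 0 * (R ^ 2 - b ^ 2 / 2) + g 1 * (R ^ 2 - a ^ 2 / 2) + g 2 * R ^ 2 = 0 := by
    have h := congrArg (fun z => ⟪C - O, z⟫) hgsum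
    simp only [inner_add_right, real_inner_smul_right, hWU, hWV, hWW, inner_zero_right] at h
    linarith
  have hdet : (Matrix.of ![![R ^ 2, R ^ 2 - c ^ 2 / 2, R ^ 2 - b ^ 2 / 2],
      ![R ^ 2 - c ^ 2 / 2, R ^ 2, R ^ 2 - a ^ 2 / 2],
      ![R ^ 2 - b ^ 2 / 2, R ^ 2 - a ^ 2 / 2, R ^ 2]]).det = 0 := by
    apply Matrix.exists_mulVec_eq_zero_iff.mp
    refine ⟨g, fun h => hi (by rw [h]; rfl), ?_⟩
    funext j
    fin_cases j <;>
      simp [Matrix.mulVec, dotProduct, Fin.sum_univ_three] <;> linarith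
  rw [Matrix.det_fin_three] at hdet
  simp only [Matrix.of_apply, Matrix.cons_val', Matrix.cons_val_zero, Matrix.cons_val_one,
    Matrix.head_cons, Matrix.empty_val', Matrix.cons_val_fin_one, Matrix.head_fin_const,
    Matrix.cons_val_two, Matrix.tail_cons] at hdet
  have hK : R ^ 2 * ((a + b + c) * (-a + b + c) * (a - b + c) * (a + b - c))
      = a ^ 2 * b ^ 2 * c ^ 2 := by linear_combination 4 * hdet
  -- positivity of Heron factors
  have hKpos : 0 < (a + b + c) * (-a + b + c) * (a - b + c) * (a + b - c) := by
    have habc6 : 0 < a ^ 2 * b ^ 2 * c ^ 2 := by positivity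
    rw [← hK] at habc6
    rcases mul_pos_iff.mp habc6 with ⟨_, h⟩ | ⟨h', _⟩
    · exact h
    · exact absurd h' (not_lt.mpr (sq_nonneg R))
  have hsum : 0 < a + b + c := by linarith
  have h1pos : 0 < -a + b + c := by
    by_contra h
    push_neg at h
    have t1 : 0 < a - b + c := by linarith
    have t2 : 0 < a + b - c := by linarith
    have hle : (a + b + c) * (a - b + c) * (a + b - c) * (-a + b + c) ≤ 0 :=
      mul_nonpos_of_nonneg_of_nonpos (mul_pos (mul_pos hsum t1) t2).le h
    have heq : (a + b + c) * (-a + b + c) * (a - b + c) * (a + b - c) =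
        (a + b + c) * (a - b + c) * (a + b - c) * (-a + b + c) := by ring
    rw [heq] at hKpos
    linarith
  have h2pos : 0 < a - b + c := by
    by_contra h
    push_neg at h
    have t1 : 0 < -a + b + c := by linarith
    have t2 : 0 < a + b - c := by linarith
    have hle : (a + b + c) * (-a + b + c) * (a + b - c) * (a - b + c) ≤ 0 :=
      mul_nonpos_of_nonneg_of_nonpos (mul_pos (mul_pos hsum t1) t2).le h
    have heq : (a + b + c) * (-a + b + c) * (a - b + c) * (a + b - c) =
        (a + b + c) * (-a + b + c) * (a + b - c) * (a - b + c) := by ring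
    rw [heq] at hKpos
    linarith
  have h3pos : 0 < a + b - c := by
    by_contra h
    push_neg at h
    have t1 : 0 < -a + b + c := by linarith
    have t2 : 0 < a - b + c := by linarith
    have hle : (a + b + c) * (-a + b + c) * (a - b + c) * (a + b - c) ≤ 0 :=
      mul_nonpos_of_nonneg_of_nonpos (mul_pos (mul_pos hsum t1) t2).le h
    linarith
  subst hs
  have hsa : 0 < (a + b + c) / 2 - a := by linarith
  have hprodpos : 0 < (a + b + c) / 2 * ((a + b + c) / 2 - a) * ((a + b + c) / 2 - b) *
      ((a + b + c) / 2 - c) :=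
    mul_pos (mul_pos (mul_pos (by linarith) hsa) (by linarith)) (by linarith)
  have hS2 : S ^ 2 = (a + b + c) / 2 * ((a + b + c) / 2 - a) * ((a + b + c) / 2 - b) *
      ((a + b + c) / 2 - c) := by
    rw [hS]; exact Real.sq_sqrt hprodpos.le
  have hSpos : 0 < S := by rw [hS]; exact Real.sqrt_pos.2 hprodpos
  have h16 : S ^ 2 = ((a + b + c) * (-a + b + c) * (a - b + c) * (a + b - c)) / 16 := by
    rw [hS2]; ring
  have hrapos : 0 < ra := by rw [hra]; exact div_pos hSpos hsa
  have hraS : ra * ((a + b + c) / 2 - a) = S := by rw [hra]; exact div_mul_cancel₀ S (ne_of_gt hsa)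
  -- 4 R S = a b c
  have hsq : (4 * R * S) ^ 2 = (a * b * c) ^ 2 := by
    linear_combination 16 * R ^ 2 * h16 + hK
  have hRS : 4 * R * S = a * b * c := by
    have hfac : (4 * R * S - a * b * c) * (4 * R * S + a * b * c) = 0 := by
      linear_combination hsq
    rcases mul_eq_zero.mp hfac with h | h
    · linarith
    · have h4 : 0 < 4 * R * S := mul_pos (mul_pos (by norm_num) hRpos) hSpos
      have h5 : 0 < a * b * c := mul_pos (mul_pos hapos hbpos) hcpos
      linarith
  set m : ℝ := (a + b + c) / 2 - a with hm
  -- the scaled inner product of Ia-O and Na-O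
  have hxy : (-a + b + c) * (((a + b + c) / 2 + (c - (a + b + c) / 2) +
      (b - (a + b + c) / 2)) * ⟪Ia - O, Na - O⟫) =
      2 * m ^ 2 * R ^ 2 - 3 / 2 * (a * b * c) * m -
        (a + b + c) * (-a + b + c) * (a - b + c) * (a + b - c) / 8 -
        m ^ 2 * (a ^ 2 + b ^ 2 + c ^ 2) / 2 := by
    have h : ⟪(-a + b + c) • (Ia - O), ((a + b + c) / 2 + (c - (a + b + c) / 2) +
        (b - (a + b + c) / 2)) • (Na - O)⟫ =
        ⟪(-a) • (A - O) + b • (B - O) + c • (C - O),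
          ((a + b + c) / 2) • (A - O) + (c - (a + b + c) / 2) • (B - O) +
            (b - (a + b + c) / 2) • (C - O)⟫ := by
      rw [hIa O, hNa O]
    simp only [inner_add_left, inner_add_right, real_inner_smul_left, real_inner_smul_right,
      hUU, hVV, hWW, hUV, hVU, hUW, hWU, hVW, hWV] at h
    linear_combination h
  have hxx : (-a + b + c) * ((-a + b + c) * ⟪Ia - O, Ia - O⟫) =
      4 * m ^ 2 * R ^ 2 + 2 * (a * b * c) * m := by
    have h : ⟪(-a + b + c) • (Ia - O), (-a + b + c) • (Ia - O)⟫ =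
        ⟪(-a) • (A - O) + b • (B - O) + c • (C - O),
          (-a) • (A - O) + b • (B - O) + c • (C - O)⟫ := by
      rw [hIa O]
    simp only [inner_add_left, inner_add_right, real_inner_smul_left, real_inner_smul_right,
      hUU, hVV, hWW, hUV, hVU, hUW, hWU, hVW, hWV] at h
    linear_combination h
  have hyy : ((a + b + c) / 2 + (c - (a + b + c) / 2) + (b - (a + b + c) / 2)) *
      (((a + b + c) / 2 + (c - (a + b + c) / 2) + (b - (a + b + c) / 2)) *
        ⟪Na - O, Na - O⟫) =
      m ^ 2 * R ^ 2 + (a * b * c) * m +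
        (a + b + c) * (-a + b + c) * (a - b + c) * (a + b - c) / 4 := by
    have h : ⟪((a + b + c) / 2 + (c - (a + b + c) / 2) + (b - (a + b + c) / 2)) • (Na - O),
        ((a + b + c) / 2 + (c - (a + b + c) / 2) + (b - (a + b + c) / 2)) • (Na - O)⟫ =
        ⟪((a + b + c) / 2) • (A - O) + (c - (a + b + c) / 2) • (B - O) +
            (b - (a + b + c) / 2) • (C - O),
          ((a + b + c) / 2) • (A - O) + (c - (a + b + c) / 2) • (B - O) +
            (b - (a + b + c) / 2) • (C - O)⟫ := by
      rw [hNa O]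
    simp only [inner_add_left, inner_add_right, real_inner_smul_left, real_inner_smul_right,
      hUU, hVV, hWW, hUV, hVU, hUW, hWU, hVW, hWV] at h
    linear_combination h
  have hmpos : 0 < m := hsa
  -- value of the inner product
  have hinner : ⟪Ia - O, Na - O⟫ =
      R ^ 2 - 3 * R * ra - ra ^ 2 - (a ^ 2 + b ^ 2 + c ^ 2) / 4 := by
    have h2 : (-a + b + c) * (((a + b + c) / 2 + (c - (a + b + c) / 2) +
        (b - (a + b + c) / 2)) * (R ^ 2 - 3 * R * ra - ra ^ 2 - (a ^ 2 + b ^ 2 + c ^ 2) / 4)) =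
        2 * m ^ 2 * R ^ 2 - 3 / 2 * (a * b * c) * m -
          (a + b + c) * (-a + b + c) * (a - b + c) * (a + b - c) / 8 -
          m ^ 2 * (a ^ 2 + b ^ 2 + c ^ 2) / 2 := by
      linear_combination (-6 * R * m - 2 * (ra * m + S)) * hraS - 3 / 2 * m * hRS - 2 * h16
    have h3 : ((-a + b + c) * ((a + b + c) / 2 + (c - (a + b + c) / 2) +
        (b - (a + b + c) / 2))) * (⟪Ia - O, Na - O⟫ -
          (R ^ 2 - 3 * R * ra - ra ^ 2 - (a ^ 2 + b ^ 2 + c ^ 2) / 4)) = 0 := by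
      linear_combination hxy - h2
    rcases mul_eq_zero.mp h3 with h | h
    · exact absurd h (ne_of_gt (mul_pos h1pos (by linarith)))
    · linarith [sub_eq_zero.mp h]
  -- norm of Ia - O
  have hxxv : ⟪Ia - O, Ia - O⟫ = R ^ 2 + 2 * R * ra := by
    have h2 : (-a + b + c) * ((-a + b + c) * (R ^ 2 + 2 * R * ra)) =
        4 * m ^ 2 * R ^ 2 + 2 * (a * b * c) * m := by
      linear_combination 8 * R * m * hraS + 2 * m * hRS
    have h3 : ((-a + b + c) * (-a + b + c)) *
        (⟪Ia - O, Ia - O⟫ - (R ^ 2 + 2 * R * ra)) = 0 := by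
      linear_combination hxx - h2
    rcases mul_eq_zero.mp h3 with h | h
    · exact absurd h (ne_of_gt (mul_pos h1pos h1pos))
    · linarith [sub_eq_zero.mp h]
  have hnx : ‖Ia - O‖ = Real.sqrt (R ^ 2 + 2 * R * ra) := by
    rw [← Real.sqrt_sq (norm_nonneg (Ia - O)), ← real_inner_self_eq_norm_sq, hxxv]
  -- norm of Na - O
  have hyyv : ⟪Na - O, Na - O⟫ = (R + 2 * ra) ^ 2 := by
    have h2 : ((a + b + c) / 2 + (c - (a + b + c) / 2) + (b - (a + b + c) / 2)) *
        (((a + b + c) / 2 + (c - (a + b + c) / 2) + (b - (a + b + c) / 2)) *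
          (R + 2 * ra) ^ 2) =
        m ^ 2 * R ^ 2 + (a * b * c) * m +
          (a + b + c) * (-a + b + c) * (a - b + c) * (a + b - c) / 4 := by
      linear_combination (4 * R * m + 4 * (ra * m + S)) * hraS + m * hRS + 4 * h16
    have h3 : (((a + b + c) / 2 + (c - (a + b + c) / 2) + (b - (a + b + c) / 2)) *
        ((a + b + c) / 2 + (c - (a + b + c) / 2) + (b - (a + b + c) / 2))) *
        (⟪Na - O, Na - O⟫ - (R + 2 * ra) ^ 2) = 0 := by
      linear_combination hyy - h2
    rcases mul_eq_zero.mp h3 with h | h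
    · exact absurd h (ne_of_gt (mul_pos (by linarith) (by linarith)))
    · linarith [sub_eq_zero.mp h]
  have hny : ‖Na - O‖ = R + 2 * ra := by
    have h2 : ‖Na - O‖ ^ 2 = (R + 2 * ra) ^ 2 := by
      rw [← real_inner_self_eq_norm_sq, hyyv]
    have hfac : (‖Na - O‖ - (R + 2 * ra)) * (‖Na - O‖ + (R + 2 * ra)) = 0 := by
      linear_combination h2
    rcases mul_eq_zero.mp hfac with h | h
    · linarith [sub_eq_zero.mp h]
    · have := norm_nonneg (Na - O)
      linarith
  -- conclusion
  have hang : ∠ Ia O Na = InnerProductGeometry.angle (Ia - O) (Na - O) := rfl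
  rw [hang, InnerProductGeometry.cos_angle, hinner, hnx, hny]
  ring
end

section
/- (Dual Blundon inequality) In any nondegenerate triangle with side lengths a, b, c, circumradius R and exradius rₐ opposite to A, one has 0 ≤ (a² + b² + c²)/4 ≤ R² − 3Rrₐ − rₐ² + (R + 2rₐ)·√(R² + 2Rrₐ). -/
open scoped RealInnerProductSpace

set_option maxHeartbeats 1000000

private lemma le_of_sq_le_sq' (a b : ℝ) (h : a^2 ≤ b^2) (hb : 0 ≤ b) : a ≤ b := by
  nlinarith [sq_nonneg (a-b), sq_nonneg (a+b)]

private lemma key_poly (x y z : ℝ) (hx : 0 < x) (hy : 0 < y) (hz : 0 < z) :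
    (4*(x+y+z)*x*y*z*((y+z)^2+(z+x)^2+(x+y)^2)
      + 12*((x+y+z)*y*z)*((y+z)*(z+x)*(x+y))
      + 16*((x+y+z)*y*z)^2 - ((y+z)*(z+x)*(x+y))^2)^2
    ≤ ((y+z)*(z+x)*(x+y))*(((y+z)*(z+x)*(x+y)) + 8*(x+y+z)*y*z)^3 := by
  have hW : (0:ℝ) ≤ (y-z)^2 * (x^3*y*z*
      (64*z^5+384*y*z^4+848*y^2*z^3+848*y^3*z^2+384*y^4*z+64*y^5
        + x*(256*z^4+1184*y*z^3+1872*y^2*z^2+1184*y^3*z+256*y^4)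
        + x^2*(400*z^3+1328*y*z^2+1328*y^2*z+400*y^3)
        + x^3*(304*z^2+640*y*z+304*y^2)
        + x^4*(112*z+112*y) + x^5*16)) := by positivity
  have hid : ((y+z)*(z+x)*(x+y))*(((y+z)*(z+x)*(x+y)) + 8*(x+y+z)*y*z)^3
      - (4*(x+y+z)*x*y*z*((y+z)^2+(z+x)^2+(x+y)^2)
        + 12*((x+y+z)*y*z)*((y+z)*(z+x)*(x+y))
        + 16*((x+y+z)*y*z)^2 - ((y+z)*(z+x)*(x+y))^2)^2
      = (y-z)^2 * (x^3*y*z*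
      (64*z^5+384*y*z^4+848*y^2*z^3+848*y^3*z^2+384*y^4*z+64*y^5
        + x*(256*z^4+1184*y*z^3+1872*y^2*z^2+1184*y^3*z+256*y^4)
        + x^2*(400*z^3+1328*y*z^2+1328*y^2*z+400*y^3)
        + x^3*(304*z^2+640*y*z+304*y^2)
        + x^4*(112*z+112*y) + x^5*16)) := by ring
  linarith [hW, hid]

private lemma main_ineq (a b c s x y z S R ra d : ℝ)
    (hx : 0 < x) (hy : 0 < y) (hz : 0 < z)
    (ha : a = y + z) (hb : b = z + x) (hc : c = x + y) (hs : s = x + y + z)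
    (hS0 : 0 < S) (hS2 : S^2 = s*(s-a)*(s-b)*(s-c))
    (hra : (s-a)*ra = S)
    (hR0 : 0 ≤ R) (hR2 : 16*(s*((s-a)*((s-b)*(s-c))))*R^2 = (a*b*c)^2)
    (hd0 : 0 ≤ d) (hd2 : d^2 = R^2 + 2*R*ra) :
    (a^2+b^2+c^2)/4 ≤ R^2 - 3*R*ra - ra^2 + (R+2*ra)*d := by
  subst ha hb hc hs
  -- rename for brevity
  have hxyz : (0:ℝ) < (x+y+z)*x*y*z := by positivity
  have habc : (0:ℝ) < (y+z)*(z+x)*(x+y) := by positivity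
  have hR2' : 16*((x+y+z)*x*y*z)*R^2 = ((y+z)*(z+x)*(x+y))^2 := by
    linear_combination hR2
  have hRpos : 0 < R := by
    rcases hR0.eq_or_lt with h | h
    · exfalso
      have h0 : ((y+z)*(z+x)*(x+y))^2 = 0 := by rw [← hR2', ← h]; ring
      nlinarith [habc, h0]
    · exact h
  have hrapos : 0 < ra := by
    rcases lt_or_ge 0 ra with h | h
    · exact h
    · exfalso; nlinarith [mul_nonpos_of_nonneg_of_nonpos hx.le h]
  -- e2 : 4*x*(R*ra) = abc
  have hsq : (4*x*(R*ra))^2 = ((y+z)*(z+x)*(x+y))^2 := by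
    linear_combination 16*R^2*(x*ra+S)*hra + 16*R^2*hS2 + hR2'
  have e2 : 4*x*(R*ra) = (y+z)*(z+x)*(x+y) := by
    have h1 : (4*x*(R*ra) - ((y+z)*(z+x)*(x+y))) * (4*x*(R*ra) + ((y+z)*(z+x)*(x+y))) = 0 := by
      linear_combination hsq
    rcases mul_eq_zero.mp h1 with h | h
    · linarith
    · nlinarith [mul_pos (mul_pos hx hRpos) hrapos]
  have e3 : x*ra^2 = (x+y+z)*(y*z) := by
    have h1 : x*(x*ra^2 - (x+y+z)*(y*z)) = 0 := by
      linear_combination (x*ra+S)*hra + hS2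
    rcases mul_eq_zero.mp h1 with h | h
    · exact absurd h (ne_of_gt hx)
    · linarith
  have u1 : 16*((x+y+z)*x*y*z)*(R^2+2*R*ra)
      = ((y+z)*(z+x)*(x+y))*(((y+z)*(z+x)*(x+y)) + 8*(x+y+z)*y*z) := by
    linear_combination hR2' + 8*((x+y+z)*y*z)*e2
  have u2 : 16*((x+y+z)*x*y*z)*((R+2*ra)^2)
      = (((y+z)*(z+x)*(x+y)) + 8*(x+y+z)*y*z)^2 := by
    linear_combination hR2' + 16*((x+y+z)*y*z)*e2 + 64*((x+y+z)*y*z)*e3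
  set M : ℝ := 16*((x+y+z)*x*y*z) with hM
  set K : ℝ := (R+2*ra)*d with hK
  have hMK2 : (M*K)^2 = ((y+z)*(z+x)*(x+y))*(((y+z)*(z+x)*(x+y)) + 8*(x+y+z)*y*z)^3 := by
    have step : (M*K)^2 = (M*((R+2*ra)^2)) * (M*(d^2)) := by rw [hK]; ring
    rw [step, hd2, u2, u1]; ring
  set E : ℝ := ((y+z)^2+(z+x)^2+(x+y)^2)/4 - R^2 + 3*(R*ra) + ra^2 with hE
  have hMEN : M*E = 4*(x+y+z)*x*y*z*((y+z)^2+(z+x)^2+(x+y)^2)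
      + 12*((x+y+z)*y*z)*((y+z)*(z+x)*(x+y))
      + 16*((x+y+z)*y*z)^2 - ((y+z)*(z+x)*(x+y))^2 := by
    rw [hE, hM]
    linear_combination (-1:ℝ)*hR2' + 12*((x+y+z)*y*z)*e2 + 16*((x+y+z)*y*z)*e3
  have hNsq := key_poly x y z hx hy hz
  have h1 : (M*E)^2 ≤ (M*K)^2 := by rw [hMEN, hMK2]; exact hNsq
  have hK0 : 0 ≤ K := mul_nonneg (by positivity) hd0
  have hM0 : 0 < M := by rw [hM]; positivity
  have hMK0 : 0 ≤ M*K := mul_nonneg hM0.le hK0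
  have hME_le : M*E ≤ M*K := le_of_sq_le_sq' _ _ h1 hMK0
  have hEK : E ≤ K := le_of_mul_le_mul_left hME_le hM0
  rw [hE, hK] at hEK
  linarith

/-- dual Blundon inequality: in any nondegenerate triangle with side lengths
`a, b, c`, circumradius `R` and exradius `rₐ` opposite `A`,
`0 ≤ (a² + b² + c²)/4 ≤ R² − 3Rrₐ − rₐ² + (R + 2rₐ)·√(R² + 2Rrₐ)`. -/
theorem stmt_12 (A B C O : EuclideanSpace ℝ (Fin 2)) (a b c s S R ra : ℝ)
    (hABC : AffineIndependent ℝ ![A, B, C])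
    (ha : a = dist B C) (hb : b = dist C A) (hc : c = dist A B)
    (hs : s = (a + b + c) / 2)
    (hS : S = Real.sqrt (s * (s - a) * (s - b) * (s - c)))
    (hra : ra = S / (s - a))
    (hOA : dist O A = R) (hOB : dist O B = R) (hOC : dist O C = R) :
    0 ≤ (a ^ 2 + b ^ 2 + c ^ 2) / 4 ∧
      (a ^ 2 + b ^ 2 + c ^ 2) / 4 ≤
        R ^ 2 - 3 * R * ra - ra ^ 2 + (R + 2 * ra) * Real.sqrt (R ^ 2 + 2 * R * ra) := by
  -- distinct points
  have hAB : A ≠ B := hABC.injective.ne (by decide : (0 : Fin 3) ≠ 1)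
  have hAC : A ≠ C := hABC.injective.ne (by decide : (0 : Fin 3) ≠ 2)
  have hBC : B ≠ C := hABC.injective.ne (by decide : (1 : Fin 3) ≠ 2)
  have hapos : 0 < a := ha ▸ dist_pos.mpr hBC
  have hbpos : 0 < b := hb ▸ dist_pos.mpr (fun h => hAC h.symm)
  have hcpos : 0 < c := hc ▸ dist_pos.mpr hAB
  -- not collinear
  have hnc : ¬ Collinear ℝ ({A, B, C} : Set (EuclideanSpace ℝ (Fin 2))) :=
    affineIndependent_iff_not_collinear_set.mp hABC
  -- strict triangle inequalities
  have hx : 0 < s - a := by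
    have ht : dist B A + dist A C ≥ dist B C := by
      have := dist_triangle B A C; linarith
    have hne : dist B A + dist A C ≠ dist B C := by
      intro h
      have hw : Wbtw ℝ B A C := dist_add_dist_eq_iff.mp h
      have := hw.collinear
      apply hnc
      have hset : ({B, A, C} : Set (EuclideanSpace ℝ (Fin 2))) = {A, B, C} := by
        ext p; simp only [Set.mem_insert_iff, Set.mem_singleton_iff]; tauto
      rwa [hset] at this
    have : dist B C < dist B A + dist A C := lt_of_le_of_ne (by linarith [dist_triangle B A C]) (Ne.symm hne)
    rw [hs, ha, hb, hc]
    rw [dist_comm B A, dist_comm A C] at this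
    linarith
  have hy : 0 < s - b := by
    have hne : dist C B + dist B A ≠ dist C A := by
      intro h
      have hw : Wbtw ℝ C B A := dist_add_dist_eq_iff.mp h
      have := hw.collinear
      apply hnc
      have hset : ({C, B, A} : Set (EuclideanSpace ℝ (Fin 2))) = {A, B, C} := by
        ext p; simp only [Set.mem_insert_iff, Set.mem_singleton_iff]; tauto
      rwa [hset] at this
    have : dist C A < dist C B + dist B A := lt_of_le_of_ne (dist_triangle C B A) (Ne.symm hne)
    rw [hs, ha, hb, hc]
    rw [dist_comm C B, dist_comm B A] at this
    linarith
  have hz : 0 < s - c := by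
    have hne : dist A C + dist C B ≠ dist A B := by
      intro h
      have hw : Wbtw ℝ A C B := dist_add_dist_eq_iff.mp h
      have := hw.collinear
      apply hnc
      have hset : ({A, C, B} : Set (EuclideanSpace ℝ (Fin 2))) = {A, B, C} := by
        ext p; simp only [Set.mem_insert_iff, Set.mem_singleton_iff]; tauto
      rwa [hset] at this
    have : dist A B < dist A C + dist C B := lt_of_le_of_ne (dist_triangle A C B) (Ne.symm hne)
    rw [hs, ha, hb, hc]
    rw [dist_comm A C, dist_comm C B] at this
    linarith
  -- circumradius relation via Gram determinant
  have hR0 : 0 ≤ R := hOA ▸ dist_nonneg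
  have hnormA : ‖A - O‖ = R := by rw [← dist_eq_norm, dist_comm]; exact hOA
  have hnormB : ‖B - O‖ = R := by rw [← dist_eq_norm, dist_comm]; exact hOB
  have hnormC : ‖C - O‖ = R := by rw [← dist_eq_norm, dist_comm]; exact hOC
  have hAA : ⟪A - O, A - O⟫ = R^2 := by rw [real_inner_self_eq_norm_sq, hnormA]
  have hBB : ⟪B - O, B - O⟫ = R^2 := by rw [real_inner_self_eq_norm_sq, hnormB]
  have hCC : ⟪C - O, C - O⟫ = R^2 := by rw [real_inner_self_eq_norm_sq, hnormC]
  have hP : ⟪A - O, B - O⟫ = R^2 - c^2/2 := by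
    have h := norm_sub_sq_real (A - O) (B - O)
    rw [sub_sub_sub_cancel_right, ← dist_eq_norm, ← hc, hnormA, hnormB] at h
    linarith
  have hQ : ⟪A - O, C - O⟫ = R^2 - b^2/2 := by
    have h := norm_sub_sq_real (A - O) (C - O)
    rw [sub_sub_sub_cancel_right, ← dist_eq_norm, dist_comm A C, ← hb, hnormA, hnormC] at h
    linarith
  have hT : ⟪B - O, C - O⟫ = R^2 - a^2/2 := by
    have h := norm_sub_sq_real (B - O) (C - O)
    rw [sub_sub_sub_cancel_right, ← dist_eq_norm, ← ha, hnormB, hnormC] at h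
    linarith
  have hdep : ¬ LinearIndependent ℝ ![A - O, B - O, C - O] := by
    intro h
    have hcard := h.fintype_card_le_finrank
    simp [finrank_euclideanSpace_fin] at hcard
  obtain ⟨g, hg, i, hgi⟩ := Fintype.not_linearIndependent_iff.mp hdep
  have hsum : g 0 • (A - O) + g 1 • (B - O) + g 2 • (C - O) = 0 := by
    have := hg
    rwa [Fin.sum_univ_three] at this
  have r0 : R^2 * g 0 + (R^2 - c^2/2) * g 1 + (R^2 - b^2/2) * g 2 = 0 := by
    have h := congrArg (fun w => ⟪A - O, w⟫) hsum
    simp only [inner_add_right, real_inner_smul_right, inner_zero_right] at h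
    rw [hAA, hP, hQ] at h
    linarith
  have r1 : (R^2 - c^2/2) * g 0 + R^2 * g 1 + (R^2 - a^2/2) * g 2 = 0 := by
    have h := congrArg (fun w => ⟪B - O, w⟫) hsum
    simp only [inner_add_right, real_inner_smul_right, inner_zero_right] at h
    rw [real_inner_comm (A - O) (B - O), hP, hBB, hT] at h
    linarith
  have r2 : (R^2 - b^2/2) * g 0 + (R^2 - a^2/2) * g 1 + R^2 * g 2 = 0 := by
    have h := congrArg (fun w => ⟪C - O, w⟫) hsum
    simp only [inner_add_right, real_inner_smul_right, inner_zero_right] at h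
    rw [real_inner_comm (A - O) (C - O), hQ, real_inner_comm (B - O) (C - O), hT, hCC] at h
    linarith
  have hdet : (!![R^2, R^2 - c^2/2, R^2 - b^2/2;
                  R^2 - c^2/2, R^2, R^2 - a^2/2;
                  R^2 - b^2/2, R^2 - a^2/2, R^2] : Matrix (Fin 3) (Fin 3) ℝ).det = 0 := by
    apply Matrix.exists_mulVec_eq_zero_iff.mp
    refine ⟨g, fun h => hgi (by rw [h]; rfl), ?_⟩
    funext j
    fin_cases j <;>
      simp [Matrix.mulVec, dotProduct, Fin.sum_univ_three] <;>
      linarith [r0, r1, r2]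
  simp [Matrix.det_fin_three] at hdet
  have hR2 : 16*(s*((s-a)*((s-b)*(s-c))))*R^2 = (a*b*c)^2 := by
    rw [hs]; linear_combination 4*hdet
  have hspos : 0 < s := by rw [hs]; linarith
  have hsprod : 0 < s*(s-a)*(s-b)*(s-c) := by positivity
  have hS0 : 0 < S := by rw [hS]; exact Real.sqrt_pos.mpr hsprod
  have hS2 : S^2 = s*(s-a)*(s-b)*(s-c) := by rw [hS]; exact Real.sq_sqrt hsprod.le
  have hra' : (s-a)*ra = S := by rw [hra]; field_simp
  have hrapos : 0 < ra := by rw [hra]; exact div_pos hS0 hx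
  set d := Real.sqrt (R^2 + 2*R*ra) with hd
  have hd0 : 0 ≤ d := Real.sqrt_nonneg _
  have hd2 : d^2 = R^2 + 2*R*ra :=
    Real.sq_sqrt (add_nonneg (sq_nonneg R)
      (mul_nonneg (mul_nonneg (by norm_num) hR0) hrapos.le))
  constructor
  · positivity
  · have ha2 : a = (s-b) + (s-c) := by rw [hs]; ring
    have hb2 : b = (s-c) + (s-a) := by rw [hs]; ring
    have hc2 : c = (s-a) + (s-b) := by rw [hs]; ring
    have hs2 : s = (s-a) + (s-b) + (s-c) := by rw [hs]; ring
    exact main_ineq a b c s (s-a) (s-b) (s-c) S R ra d hx hy hz ha2 hb2 hc2 hs2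
      hS0 hS2 hra' hR0 hR2 hd0 hd2
end

section
/- In any nondegenerate triangle with circumradius R and exradius rₐ opposite to A, the distance between the excenter Iₐ opposite A and the adjoint Nagel point Nₐ satisfies IₐNₐ² = 12Rrₐ + 6rₐ² + (a² + b² + c²)/2. -/
/-!
Both points are barycentric combinations of `A`, `B`, `C`, and `(b + c - a) • (Iₐ - Nₐ)` has
weights `-(2a + b + c)`, `a + 2b - c`, `a - b + 2c`, which sum to zero. The squared length of such
a combination depends on the side lengths only, so `IₐNₐ²` is a rational function of `a`, `b`, `c`.
The circumradius enters through `abc = 4RS`, which is the vanishing of the Gram determinant of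
`OA`, `OB`, `OC` in the plane, and the exradius through `rₐ (b + c - a) = 2S`.
-/

open scoped InnerProductSpace
open Module

theorem Matrix.det_gram_eq_zero_of_finrank_lt {𝕜 E n : Type*} [RCLike 𝕜] [NormedAddCommGroup E]
    [InnerProductSpace 𝕜 E] [FiniteDimensional 𝕜 E] [Fintype n] [DecidableEq n] (v : n → E)
    (h : finrank 𝕜 E < Fintype.card n) : (Matrix.gram 𝕜 v).det = 0 := by
  by_contra hdet
  exact (Matrix.linearIndependent_of_det_gram_ne_zero hdet).fintype_card_le_finrank.not_gt h

theorem AffineIndependent.dist_lt_dist_add_dist {V P : Type*} [NormedAddCommGroup V]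
    [NormedSpace ℝ V] [StrictConvexSpace ℝ V] [MetricSpace P] [NormedAddTorsor V P] {A B C : P}
    (h : AffineIndependent ℝ ![A, B, C]) :
    dist B C < dist C A + dist A B ∧ dist C A < dist A B + dist B C ∧
      dist A B < dist B C + dist C A := by
  have hABC := affineIndependent_iff_not_collinear_set.1 h
  have key (X Y Z : P) (hXYZ : ({A, B, C} : Set P) ⊆ {X, Y, Z}) :
      dist X Z < dist X Y + dist Y Z :=
    dist_lt_dist_add_dist_iff.2 fun hw => hABC (hw.collinear.subset hXYZ)
  refine ⟨?_, ?_, ?_⟩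
  · linarith [key B A C (by simp [Set.insert_subset_iff]), dist_comm A B, dist_comm A C]
  · linarith [key C B A (by simp [Set.insert_subset_iff]), dist_comm B C, dist_comm B A]
  · linarith [key A C B (by simp [Set.insert_subset_iff]), dist_comm C A, dist_comm C B]

noncomputable def heronArea (a b c : ℝ) : ℝ :=
  let s := (a + b + c) / 2
  Real.sqrt (s * (s - a) * (s - b) * (s - c))

theorem sixteen_mul_heronArea_sq {a b c : ℝ} (ha : a ≤ b + c) (hb : b ≤ c + a) (hc : c ≤ a + b) :
    16 * heronArea a b c ^ 2 = (a + b + c) * (-a + b + c) * (a - b + c) * (a + b - c) := by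
  rw [heronArea, Real.sq_sqrt]
  · ring
  · refine mul_nonneg (mul_nonneg (mul_nonneg ?_ ?_) ?_) ?_ <;> linarith

section InnerProductSpace

variable {E : Type*} [NormedAddCommGroup E] [InnerProductSpace ℝ E]

theorem inner_sub_sub_of_dist_eq_s15 {O A B : E} {R : ℝ} (hA : dist O A = R) (hB : dist O B = R) :
    ⟪A - O, B - O⟫_ℝ = R ^ 2 - dist A B ^ 2 / 2 := by
  have h := norm_sub_sq_real (A - O) (B - O)
  rw [sub_sub_sub_cancel_right, ← dist_eq_norm, ← dist_eq_norm, ← dist_eq_norm, dist_comm A O,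
    dist_comm B O, hA, hB] at h
  linarith

theorem norm_smul_sub_add_smul_sub_add_smul_sub_sq {x y z : ℝ} (hxyz : x + y + z = 0)
    (A B C M : E) :
    ‖x • (A - M) + y • (B - M) + z • (C - M)‖ ^ 2 =
      -(x * y * dist A B ^ 2 + y * z * dist B C ^ 2 + z * x * dist C A ^ 2) := by
  have hz : z = -x - y := by linarith
  have hv : x • (A - M) + y • (B - M) + z • (C - M) = x • (A - C) + y • (B - C) := by
    rw [hz]; module
  have hAB := norm_sub_sq_real (A - C) (B - C)
  rw [sub_sub_sub_cancel_right] at hAB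
  rw [hv, norm_add_sq_real, norm_smul, norm_smul, inner_smul_left, inner_smul_right,
    dist_eq_norm, dist_eq_norm, dist_eq_norm, ← norm_neg (C - A), neg_sub, hz]
  simp only [Real.norm_eq_abs, mul_pow, sq_abs, conj_trivial]
  linear_combination x * y * hAB

theorem dist_mul_dist_mul_dist_sq_of_finrank_eq_two (hE : finrank ℝ E = 2) {A B C O : E} {R : ℝ}
    (hA : dist O A = R) (hB : dist O B = R) (hC : dist O C = R) :
    (dist B C * dist C A * dist A B) ^ 2 = R ^ 2 *
      ((dist B C + dist C A + dist A B) * (-dist B C + dist C A + dist A B) *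
        (dist B C - dist C A + dist A B) * (dist B C + dist C A - dist A B)) := by
  have : FiniteDimensional ℝ E := Module.finite_of_finrank_eq_succ hE
  have hdet := Matrix.det_gram_eq_zero_of_finrank_lt (𝕜 := ℝ) ![A - O, B - O, C - O] (by simp [hE])
  rw [Matrix.det_fin_three] at hdet
  simp only [Matrix.gram_apply, Matrix.cons_val_zero, Matrix.cons_val_one, Matrix.cons_val_two,
    Matrix.head_cons, Matrix.tail_cons] at hdet
  rw [inner_sub_sub_of_dist_eq_s15 hA hB, inner_sub_sub_of_dist_eq_s15 hA hC,
    inner_sub_sub_of_dist_eq_s15 hB hA, inner_sub_sub_of_dist_eq_s15 hB hC,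
    inner_sub_sub_of_dist_eq_s15 hC hA, inner_sub_sub_of_dist_eq_s15 hC hB,
    inner_sub_sub_of_dist_eq_s15 hA hA, inner_sub_sub_of_dist_eq_s15 hB hB,
    inner_sub_sub_of_dist_eq_s15 hC hC] at hdet
  simp only [dist_self] at hdet
  rw [dist_comm B A, dist_comm A C, dist_comm C B] at hdet
  linear_combination (-4) * hdet

theorem four_mul_heronArea_mul_of_dist_eq (hE : finrank ℝ E = 2) {A B C O : E} {R : ℝ}
    (hA : dist O A = R) (hB : dist O B = R) (hC : dist O C = R) :
    4 * heronArea (dist B C) (dist C A) (dist A B) * R = dist B C * dist C A * dist A B := by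
  have h := dist_mul_dist_mul_dist_sq_of_finrank_eq_two hE hA hB hC
  rw [← sixteen_mul_heronArea_sq (by linarith [dist_triangle B A C, dist_comm A B, dist_comm A C])
    (by linarith [dist_triangle C B A, dist_comm B C, dist_comm B A])
    (by linarith [dist_triangle A C B, dist_comm C A, dist_comm C B])] at h
  refine (pow_left_inj₀ ?_ (by positivity) two_ne_zero).1 (by linear_combination -h)
  exact mul_nonneg (mul_nonneg zero_le_four (Real.sqrt_nonneg _)) (hA ▸ dist_nonneg)

end InnerProductSpace

/-- in any nondegenerate triangle with circumradius `R` and exradius `rₐ`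
opposite `A`, the excenter `Iₐ` opposite `A` and the adjoint Nagel point `Nₐ` satisfy
`IₐNₐ² = 12Rrₐ + 6rₐ² + (a² + b² + c²)/2`. -/
theorem stmt_15 (A B C O Ia Na : EuclideanSpace ℝ (Fin 2)) (a b c s S R ra : ℝ)
    (hABC : AffineIndependent ℝ ![A, B, C])
    (ha : a = dist B C) (hb : b = dist C A) (hc : c = dist A B)
    (hs : s = (a + b + c) / 2)
    (hS : S = Real.sqrt (s * (s - a) * (s - b) * (s - c)))
    (hra : ra = S / (s - a))
    (hOA : dist O A = R) (hOB : dist O B = R) (hOC : dist O C = R)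
    (hIa : ∀ M : EuclideanSpace ℝ (Fin 2),
      (-a + b + c) • (Ia - M) = (-a) • (A - M) + b • (B - M) + c • (C - M))
    (hNa : ∀ M : EuclideanSpace ℝ (Fin 2),
      (s + (c - s) + (b - s)) • (Na - M) =
        s • (A - M) + (c - s) • (B - M) + (b - s) • (C - M)) :
    dist Ia Na ^ 2 = 12 * R * ra + 6 * ra ^ 2 + (a ^ 2 + b ^ 2 + c ^ 2) / 2 := by
  have hS' : S = heronArea a b c := by rw [hS, hs, heronArea]
  have hR : 4 * S * R = a * b * c := by
    rw [hS', ha, hb, hc]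
    exact four_mul_heronArea_mul_of_dist_eq finrank_euclideanSpace_fin hOA hOB hOC
  obtain ⟨hta, htb, htc⟩ := hABC.dist_lt_dist_add_dist
  rw [← ha, ← hb, ← hc] at hta htb htc
  have hheron := hS' ▸ sixteen_mul_heronArea_sq hta.le htb.le htc.le
  subst hs
  have hD : (-a + b + c) • (Ia - Na) = (-(2 * a + b + c)) • (A - A) + (a + 2 * b - c) • (B - A)
      + (a - b + 2 * c) • (C - A) := by
    linear_combination (norm := module) hIa A - (2 : ℝ) • hNa A
  have hd := congrArg (‖·‖ ^ 2) hD
  rw [norm_smul, mul_pow, Real.norm_eq_abs, sq_abs, ← dist_eq_norm,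
    norm_smul_sub_add_smul_sub_add_smul_sub_sq (by ring), ← ha, ← hb, ← hc] at hd
  have hk : -a + b + c ≠ 0 := by linarith
  have hra' : ra * (-a + b + c) = 2 * S := by
    rw [hra, div_mul_eq_mul_div, div_eq_iff (by linarith)]
    ring
  apply mul_left_cancel₀ (pow_ne_zero 2 hk)
  linear_combination hd - 12 * R * (-a + b + c) * hra' - 6 * (ra * (-a + b + c) + 2 * S) * hra'
    - 6 * (-a + b + c) * hR - 3 / 2 * hheron
end

section
/- Let A, B, C be points of a real inner product space with a = BC, b = CA, c = AB, and for i = 1, 2, 3 let Pᵢ be the barycenter of {A,B,C} with weights (tᵢ¹, tᵢ², tᵢ³), where Tᵢ := tᵢ¹ + tᵢ² + tᵢ³ ≠ 0. For i, j ∈ {1,2,3} set αᵢⱼ = tⱼ¹/Tⱼ − tᵢ¹/Tᵢ, βᵢⱼ = tⱼ²/Tⱼ − tᵢ²/Tᵢ, γᵢⱼ = tⱼ³/Tⱼ − tᵢ³/Tᵢ. If P₁, P₂, P₃ are pairwise distinct, then cos∠P₁P₂P₃ = [−a²(β₁₂γ₁₂ + β₂₃γ₂₃ − β₃₁γ₃₁)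 − b²(γ₁₂α₁₂ + γ₂₃α₂₃ − γ₃₁α₃₁) − c²(α₁₂β₁₂ + α₂₃β₂₃ − α₃₁β₃₁)] / (2·√(−β₁₂γ₁₂a² − γ₁₂α₁₂b² − α₁₂β₁₂c²)·√(−β₂₃γ₂₃a² − γ₂₃α₂₃b² − α₂₃β₂₃c²)), where ∠P₁P₂P₃ is the undirected angle at P₂ between the rays P₂P₁ and P₂P₃. -/
/-!
Relative to the vertex `C`, a barycenter with weights `(t₁, t₂, t₃)` is
`C + (t₁/T) • (A - C) + (t₂/T) • (B - C)`, so `Pⱼ - Pᵢ = αᵢⱼ • (A - C) + βᵢⱼ • (B - C)`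
with `αᵢⱼ + βᵢⱼ + γᵢⱼ = 0`. For such a displacement, expanding the square and eliminating
`⟪A - C, B - C⟫` through `c²` gives `PᵢPⱼ² = -βᵢⱼγᵢⱼa² - γᵢⱼαᵢⱼb² - αᵢⱼβᵢⱼc²`.
The cosine formula is then the law of cosines in the triangle `P₁P₂P₃`.
-/

open InnerProductGeometry

section Barycenter

variable {𝕜 E : Type*} [Field 𝕜] [AddCommGroup E] [Module 𝕜 E]

def IsBarycenter (A B C : E) (t₁ t₂ t₃ : 𝕜) (P : E) : Prop :=
  ∀ M : E, (t₁ + t₂ + t₃) • (P - M) = t₁ • (A - M) + t₂ • (B - M) + t₃ • (C - M)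

theorem IsBarycenter.sub_eq {A B C P : E} {t₁ t₂ t₃ : 𝕜}
    (hP : IsBarycenter A B C t₁ t₂ t₃ P) (hT : t₁ + t₂ + t₃ ≠ 0) :
    P - C = (t₁ / (t₁ + t₂ + t₃)) • (A - C) + (t₂ / (t₁ + t₂ + t₃)) • (B - C) := by
  apply smul_right_injective E hT
  simp only [hP C, sub_self, smul_zero, add_zero, smul_add, smul_smul,
    mul_div_cancel₀ _ hT]

end Barycenter

section Distances

variable {E : Type*} [NormedAddCommGroup E] [InnerProductSpace ℝ E]

theorem norm_smul_sub_add_smul_sub_sq {A B C : E} {α β γ : ℝ} (h : α + β + γ = 0) :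
    ‖α • (A - C) + β • (B - C)‖ ^ 2 =
      -(β * γ * dist B C ^ 2) - γ * α * dist C A ^ 2 - α * β * dist A B ^ 2 := by
  have hAB : ‖A - B‖ ^ 2 = ‖A - C‖ ^ 2 + ‖B - C‖ ^ 2 - 2 * inner ℝ (A - C) (B - C) := by
    rw [← sub_sub_sub_cancel_right A B C, norm_sub_sq_real]
    ring
  rw [dist_eq_norm, dist_eq_norm, dist_eq_norm, norm_sub_rev C A, hAB, norm_add_sq_real,
    norm_smul, norm_smul, real_inner_smul_left, real_inner_smul_right, Real.norm_eq_abs,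
    Real.norm_eq_abs, mul_pow, mul_pow, sq_abs, sq_abs, eq_neg_of_add_eq_zero_right h]
  ring

theorem IsBarycenter.dist_sq {A B C P Q : E} {s₁ s₂ s₃ t₁ t₂ t₃ α β γ : ℝ}
    (hP : IsBarycenter A B C s₁ s₂ s₃ P) (hQ : IsBarycenter A B C t₁ t₂ t₃ Q)
    (hS : s₁ + s₂ + s₃ ≠ 0) (hT : t₁ + t₂ + t₃ ≠ 0)
    (hα : α = t₁ / (t₁ + t₂ + t₃) - s₁ / (s₁ + s₂ + s₃))
    (hβ : β = t₂ / (t₁ + t₂ + t₃) - s₂ / (s₁ + s₂ + s₃))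
    (hγ : γ = t₃ / (t₁ + t₂ + t₃) - s₃ / (s₁ + s₂ + s₃)) :
    dist P Q ^ 2 =
      -(β * γ * dist B C ^ 2) - γ * α * dist C A ^ 2 - α * β * dist A B ^ 2 := by
  have hQP : Q - P = α • (A - C) + β • (B - C) := by
    rw [← sub_sub_sub_cancel_right Q P C, hP.sub_eq hS, hQ.sub_eq hT, hα, hβ]
    module
  have hsum : α + β + γ = 0 := by
    rw [hα, hβ, hγ]
    field_simp
    ring
  rw [dist_comm, dist_eq_norm, hQP, norm_smul_sub_add_smul_sub_sq hsum]

/-- Also valid when `P₁ = P₂` or `P₂ = P₃`: the angle with `0` is `π / 2` and `x / 0 = 0`. -/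
theorem cos_angle_sub_sub (P₁ P₂ P₃ : E) :
    Real.cos (angle (P₁ - P₂) (P₃ - P₂)) =
      (dist P₁ P₂ ^ 2 + dist P₂ P₃ ^ 2 - dist P₃ P₁ ^ 2) / (2 * dist P₁ P₂ * dist P₂ P₃) := by
  rw [cos_angle, real_inner_eq_norm_mul_self_add_norm_mul_self_sub_norm_sub_mul_self_div_two,
    sub_sub_sub_cancel_right, dist_eq_norm, dist_comm P₂ P₃, dist_eq_norm, dist_comm P₃ P₁,
    dist_eq_norm]
  ring

end Distances

theorem stmt_18_general {E : Type*} [NormedAddCommGroup E] [InnerProductSpace ℝ E]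
    (A B C P₁ P₂ P₃ : E)
    (t₁₁ t₁₂ t₁₃ t₂₁ t₂₂ t₂₃ t₃₁ t₃₂ t₃₃ : ℝ)
    (α₁₂ β₁₂ γ₁₂ α₂₃ β₂₃ γ₂₃ α₃₁ β₃₁ γ₃₁ : ℝ)
    (hT₁ : t₁₁ + t₁₂ + t₁₃ ≠ 0) (hT₂ : t₂₁ + t₂₂ + t₂₃ ≠ 0) (hT₃ : t₃₁ + t₃₂ + t₃₃ ≠ 0)
    (hP₁ : ∀ M : E, (t₁₁ + t₁₂ + t₁₃) • (P₁ - M) =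
      t₁₁ • (A - M) + t₁₂ • (B - M) + t₁₃ • (C - M))
    (hP₂ : ∀ M : E, (t₂₁ + t₂₂ + t₂₃) • (P₂ - M) =
      t₂₁ • (A - M) + t₂₂ • (B - M) + t₂₃ • (C - M))
    (hP₃ : ∀ M : E, (t₃₁ + t₃₂ + t₃₃) • (P₃ - M) =
      t₃₁ • (A - M) + t₃₂ • (B - M) + t₃₃ • (C - M))
    (hα₁₂ : α₁₂ = t₂₁ / (t₂₁ + t₂₂ + t₂₃) - t₁₁ / (t₁₁ + t₁₂ + t₁₃))
    (hβ₁₂ : β₁₂ = t₂₂ / (t₂₁ + t₂₂ + t₂₃) - t₁₂ / (t₁₁ + t₁₂ + t₁₃))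
    (hγ₁₂ : γ₁₂ = t₂₃ / (t₂₁ + t₂₂ + t₂₃) - t₁₃ / (t₁₁ + t₁₂ + t₁₃))
    (hα₂₃ : α₂₃ = t₃₁ / (t₃₁ + t₃₂ + t₃₃) - t₂₁ / (t₂₁ + t₂₂ + t₂₃))
    (hβ₂₃ : β₂₃ = t₃₂ / (t₃₁ + t₃₂ + t₃₃) - t₂₂ / (t₂₁ + t₂₂ + t₂₃))
    (hγ₂₃ : γ₂₃ = t₃₃ / (t₃₁ + t₃₂ + t₃₃) - t₂₃ / (t₂₁ + t₂₂ + t₂₃))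
    (hα₃₁ : α₃₁ = t₁₁ / (t₁₁ + t₁₂ + t₁₃) - t₃₁ / (t₃₁ + t₃₂ + t₃₃))
    (hβ₃₁ : β₃₁ = t₁₂ / (t₁₁ + t₁₂ + t₁₃) - t₃₂ / (t₃₁ + t₃₂ + t₃₃))
    (hγ₃₁ : γ₃₁ = t₁₃ / (t₁₁ + t₁₂ + t₁₃) - t₃₃ / (t₃₁ + t₃₂ + t₃₃)) :
    Real.cos (InnerProductGeometry.angle (P₁ - P₂) (P₃ - P₂)) =
      (-(dist B C ^ 2) * (β₁₂ * γ₁₂ + β₂₃ * γ₂₃ - β₃₁ * γ₃₁)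
          - dist C A ^ 2 * (γ₁₂ * α₁₂ + γ₂₃ * α₂₃ - γ₃₁ * α₃₁)
          - dist A B ^ 2 * (α₁₂ * β₁₂ + α₂₃ * β₂₃ - α₃₁ * β₃₁)) /
        (2 * Real.sqrt (-(β₁₂ * γ₁₂ * dist B C ^ 2) - γ₁₂ * α₁₂ * dist C A ^ 2
              - α₁₂ * β₁₂ * dist A B ^ 2) *
            Real.sqrt (-(β₂₃ * γ₂₃ * dist B C ^ 2) - γ₂₃ * α₂₃ * dist C A ^ 2
              - α₂₃ * β₂₃ * dist A B ^ 2)) := by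
  have h₁₂ := IsBarycenter.dist_sq hP₁ hP₂ hT₁ hT₂ hα₁₂ hβ₁₂ hγ₁₂
  have h₂₃ := IsBarycenter.dist_sq hP₂ hP₃ hT₂ hT₃ hα₂₃ hβ₂₃ hγ₂₃
  have h₃₁ := IsBarycenter.dist_sq hP₃ hP₁ hT₃ hT₁ hα₃₁ hβ₃₁ hγ₃₁
  rw [cos_angle_sub_sub, ← h₁₂, ← h₂₃, Real.sqrt_sq dist_nonneg, Real.sqrt_sq dist_nonneg,
    h₁₂, h₂₃, h₃₁]
  ring

/-- formula for `cos ∠P₁P₂P₃` where `P₁, P₂, P₃` are barycenters of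
`{A, B, C}` with weights `(tᵢ¹, tᵢ², tᵢ³)`, `i = 1, 2, 3`. -/
theorem stmt_18 {E : Type*} [NormedAddCommGroup E] [InnerProductSpace ℝ E]
    (A B C P₁ P₂ P₃ : E)
    (t₁₁ t₁₂ t₁₃ t₂₁ t₂₂ t₂₃ t₃₁ t₃₂ t₃₃ : ℝ)
    (α₁₂ β₁₂ γ₁₂ α₂₃ β₂₃ γ₂₃ α₃₁ β₃₁ γ₃₁ : ℝ)
    (hT₁ : t₁₁ + t₁₂ + t₁₃ ≠ 0) (hT₂ : t₂₁ + t₂₂ + t₂₃ ≠ 0) (hT₃ : t₃₁ + t₃₂ + t₃₃ ≠ 0)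
    (hP₁ : ∀ M : E, (t₁₁ + t₁₂ + t₁₃) • (P₁ - M) =
      t₁₁ • (A - M) + t₁₂ • (B - M) + t₁₃ • (C - M))
    (hP₂ : ∀ M : E, (t₂₁ + t₂₂ + t₂₃) • (P₂ - M) =
      t₂₁ • (A - M) + t₂₂ • (B - M) + t₂₃ • (C - M))
    (hP₃ : ∀ M : E, (t₃₁ + t₃₂ + t₃₃) • (P₃ - M) =
      t₃₁ • (A - M) + t₃₂ • (B - M) + t₃₃ • (C - M))
    (hα₁₂ : α₁₂ = t₂₁ / (t₂₁ + t₂₂ + t₂₃) - t₁₁ / (t₁₁ + t₁₂ + t₁₃))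
    (hβ₁₂ : β₁₂ = t₂₂ / (t₂₁ + t₂₂ + t₂₃) - t₁₂ / (t₁₁ + t₁₂ + t₁₃))
    (hγ₁₂ : γ₁₂ = t₂₃ / (t₂₁ + t₂₂ + t₂₃) - t₁₃ / (t₁₁ + t₁₂ + t₁₃))
    (hα₂₃ : α₂₃ = t₃₁ / (t₃₁ + t₃₂ + t₃₃) - t₂₁ / (t₂₁ + t₂₂ + t₂₃))
    (hβ₂₃ : β₂₃ = t₃₂ / (t₃₁ + t₃₂ + t₃₃) - t₂₂ / (t₂₁ + t₂₂ + t₂₃))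
    (hγ₂₃ : γ₂₃ = t₃₃ / (t₃₁ + t₃₂ + t₃₃) - t₂₃ / (t₂₁ + t₂₂ + t₂₃))
    (hα₃₁ : α₃₁ = t₁₁ / (t₁₁ + t₁₂ + t₁₃) - t₃₁ / (t₃₁ + t₃₂ + t₃₃))
    (hβ₃₁ : β₃₁ = t₁₂ / (t₁₁ + t₁₂ + t₁₃) - t₃₂ / (t₃₁ + t₃₂ + t₃₃))
    (hγ₃₁ : γ₃₁ = t₁₃ / (t₁₁ + t₁₂ + t₁₃) - t₃₃ / (t₃₁ + t₃₂ + t₃₃))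
    (h₁₂ : P₁ ≠ P₂) (h₂₃ : P₂ ≠ P₃) (h₁₃ : P₁ ≠ P₃) :
    Real.cos (InnerProductGeometry.angle (P₁ - P₂) (P₃ - P₂)) =
      (-(dist B C ^ 2) * (β₁₂ * γ₁₂ + β₂₃ * γ₂₃ - β₃₁ * γ₃₁)
          - dist C A ^ 2 * (γ₁₂ * α₁₂ + γ₂₃ * α₂₃ - γ₃₁ * α₃₁)
          - dist A B ^ 2 * (α₁₂ * β₁₂ + α₂₃ * β₂₃ - α₃₁ * β₃₁)) /
        (2 * Real.sqrt (-(β₁₂ * γ₁₂ * dist B C ^ 2) - γ₁₂ * α₁₂ * dist C A ^ 2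
              - α₁₂ * β₁₂ * dist A B ^ 2) *
            Real.sqrt (-(β₂₃ * γ₂₃ * dist B C ^ 2) - γ₂₃ * α₂₃ * dist C A ^ 2
              - α₂₃ * β₂₃ * dist A B ^ 2)) :=
  stmt_18_general A B C P₁ P₂ P₃ t₁₁ t₁₂ t₁₃ t₂₁ t₂₂ t₂₃ t₃₁ t₃₂ t₃₃ α₁₂ β₁₂ γ₁₂ α₂₃ β₂₃ γ₂₃ α₃₁ β₃₁
    γ₃₁ hT₁ hT₂ hT₃ hP₁ hP₂ hP₃ hα₁₂ hβ₁₂ hγ₁₂ hα₂₃ hβ₂₃ hγ₂₃ hα₃₁ hβ₃₁ hγ₃₁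
end

section
/- Let A, B, C be points of a real inner product space with a = BC, b = CA, c = AB, and for i = 1, 2, 3 let Pᵢ be the barycenter of {A,B,C} with weights (tᵢ¹, tᵢ², tᵢ³), where Tᵢ := tᵢ¹ + tᵢ² + tᵢ³ ≠ 0. For i, j ∈ {1,2,3} set αᵢⱼ = tⱼ¹/Tⱼ − tᵢ¹/Tᵢ, βᵢⱼ = tⱼ²/Tⱼ − tᵢ²/Tᵢ, γᵢⱼ = tⱼ³/Tⱼ − tᵢ³/Tᵢ. If P₁, P₂, P₃ are pairwise distinct, then |a²(β₁₂γ₁₂ + β₂₃γ₂₃ − β₃₁γ₃₁) + b²(γ₁₂α₁₂ + γ₂₃α₂₃ − γ₃₁α₃₁) + c²(α₁₂β₁₂ + α₂₃β₂₃ − α₃₁β₃₁)| ≤ 2·√(−β₁₂γ₁₂a² − γ₁₂α₁₂b² − α₁₂β₁₂c²)·√(−β₂₃γ₂₃a² − γ₂₃α₂₃b² − α₂₃β₂₃c²). -/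
/-!
If `Pᵢ` and `Pⱼ` are barycenters of `A, B, C`, then `Pⱼ - Pᵢ = αᵢⱼ A + βᵢⱼ B + γᵢⱼ C` with
`αᵢⱼ + βᵢⱼ + γᵢⱼ = 0`, and for such zero-sum combinations the squared length is
`-βγ a² - γα b² - αβ c²`. Hence the two radicands are `‖P₂ - P₁‖²` and `‖P₃ - P₂‖²`, the
left-hand side is `‖P₃ - P₁‖² - ‖P₂ - P₁‖² - ‖P₃ - P₂‖² = 2 ⟪P₂ - P₁, P₃ - P₂⟫`, and the
inequality is Cauchy–Schwarz.
-/

open scoped RealInnerProductSpace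

lemma div_add_div_add_div_sum_eq_one {K : Type*} [Field K] {t₁ t₂ t₃ : K}
    (hT : t₁ + t₂ + t₃ ≠ 0) :
    t₁ / (t₁ + t₂ + t₃) + t₂ / (t₁ + t₂ + t₃) + t₃ / (t₁ + t₂ + t₃) = 1 := by
  rw [← add_div, ← add_div, div_self hT]

lemma eq_div_smul_add_of_sum_smul_eq {K E : Type*} [Field K] [AddCommGroup E] [Module K E]
    {A B C P : E} {t₁ t₂ t₃ : K} (hT : t₁ + t₂ + t₃ ≠ 0)
    (hP : (t₁ + t₂ + t₃) • P = t₁ • A + t₂ • B + t₃ • C) :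
    P = (t₁ / (t₁ + t₂ + t₃)) • A + (t₂ / (t₁ + t₂ + t₃)) • B + (t₃ / (t₁ + t₂ + t₃)) • C := by
  rw [← inv_smul_smul₀ hT P, hP]
  simp only [smul_add, smul_smul, div_eq_inv_mul]

lemma norm_smul_add_smul_add_smul_sq_of_add_eq_zero {E : Type*} [NormedAddCommGroup E]
    [InnerProductSpace ℝ E] (A B C : E) {α β γ : ℝ} (h : α + β + γ = 0) :
    ‖α • A + β • B + γ • C‖ ^ 2 =
      -(β * γ * dist B C ^ 2) - γ * α * dist C A ^ 2 - α * β * dist A B ^ 2 := by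
  obtain rfl : γ = -α - β := by linarith
  have hcomb : α • A + β • B + (-α - β) • C = α • (A - C) + β • (B - C) := by module
  have hAB : dist A B ^ 2 = ‖A - C‖ ^ 2 - 2 * ⟪A - C, B - C⟫ + ‖B - C‖ ^ 2 := by
    rw [dist_eq_norm, ← norm_sub_sq_real, sub_sub_sub_cancel_right]
  rw [hcomb, norm_add_sq_real, norm_smul, norm_smul, real_inner_smul_left,
    real_inner_smul_right, hAB, dist_eq_norm, dist_comm, dist_eq_norm]
  simp only [mul_pow, Real.norm_eq_abs, sq_abs]
  ring

lemma norm_sub_sq_of_barycenter_eq {E : Type*} [NormedAddCommGroup E] [InnerProductSpace ℝ E]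
    {A B C P Q : E} {s₁ s₂ s₃ t₁ t₂ t₃ : ℝ} (hS : s₁ + s₂ + s₃ ≠ 0) (hT : t₁ + t₂ + t₃ ≠ 0)
    (hP : (s₁ + s₂ + s₃) • P = s₁ • A + s₂ • B + s₃ • C)
    (hQ : (t₁ + t₂ + t₃) • Q = t₁ • A + t₂ • B + t₃ • C) :
    ‖Q - P‖ ^ 2 =
      -((t₂ / (t₁ + t₂ + t₃) - s₂ / (s₁ + s₂ + s₃)) * (t₃ / (t₁ + t₂ + t₃) - s₃ / (s₁ + s₂ + s₃))
          * dist B C ^ 2)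
        - (t₃ / (t₁ + t₂ + t₃) - s₃ / (s₁ + s₂ + s₃)) * (t₁ / (t₁ + t₂ + t₃) - s₁ / (s₁ + s₂ + s₃))
          * dist C A ^ 2
        - (t₁ / (t₁ + t₂ + t₃) - s₁ / (s₁ + s₂ + s₃)) * (t₂ / (t₁ + t₂ + t₃) - s₂ / (s₁ + s₂ + s₃))
          * dist A B ^ 2 := by
  rw [← norm_smul_add_smul_add_smul_sq_of_add_eq_zero A B C (by
      linear_combination div_add_div_add_div_sum_eq_one hT - div_add_div_add_div_sum_eq_one hS),
    eq_div_smul_add_of_sum_smul_eq hS hP, eq_div_smul_add_of_sum_smul_eq hT hQ]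
  congr 2
  module

lemma abs_norm_add_sq_sub_norm_sq_sub_norm_sq_le {E : Type*} [NormedAddCommGroup E]
    [InnerProductSpace ℝ E] (u v : E) :
    |‖u + v‖ ^ 2 - ‖u‖ ^ 2 - ‖v‖ ^ 2| ≤ 2 * ‖u‖ * ‖v‖ := by
  have polarization : ‖u + v‖ ^ 2 - ‖u‖ ^ 2 - ‖v‖ ^ 2 = 2 * ⟪u, v⟫ := by
    rw [norm_add_sq_real]; ring
  rw [polarization, abs_mul, abs_two, mul_assoc]
  gcongr
  exact abs_real_inner_le_norm u v

theorem stmt_19_general {E : Type*} [NormedAddCommGroup E] [InnerProductSpace ℝ E]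
    (A B C P₁ P₂ P₃ : E)
    (t₁₁ t₁₂ t₁₃ t₂₁ t₂₂ t₂₃ t₃₁ t₃₂ t₃₃ : ℝ)
    (α₁₂ β₁₂ γ₁₂ α₂₃ β₂₃ γ₂₃ α₃₁ β₃₁ γ₃₁ : ℝ)
    (hT₁ : t₁₁ + t₁₂ + t₁₃ ≠ 0) (hT₂ : t₂₁ + t₂₂ + t₂₃ ≠ 0) (hT₃ : t₃₁ + t₃₂ + t₃₃ ≠ 0)
    (hP₁ : ∀ M : E, (t₁₁ + t₁₂ + t₁₃) • (P₁ - M) =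
      t₁₁ • (A - M) + t₁₂ • (B - M) + t₁₃ • (C - M))
    (hP₂ : ∀ M : E, (t₂₁ + t₂₂ + t₂₃) • (P₂ - M) =
      t₂₁ • (A - M) + t₂₂ • (B - M) + t₂₃ • (C - M))
    (hP₃ : ∀ M : E, (t₃₁ + t₃₂ + t₃₃) • (P₃ - M) =
      t₃₁ • (A - M) + t₃₂ • (B - M) + t₃₃ • (C - M))
    (hα₁₂ : α₁₂ = t₂₁ / (t₂₁ + t₂₂ + t₂₃) - t₁₁ / (t₁₁ + t₁₂ + t₁₃))
    (hβ₁₂ : β₁₂ = t₂₂ / (t₂₁ + t₂₂ + t₂₃) - t₁₂ / (t₁₁ + t₁₂ + t₁₃))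
    (hγ₁₂ : γ₁₂ = t₂₃ / (t₂₁ + t₂₂ + t₂₃) - t₁₃ / (t₁₁ + t₁₂ + t₁₃))
    (hα₂₃ : α₂₃ = t₃₁ / (t₃₁ + t₃₂ + t₃₃) - t₂₁ / (t₂₁ + t₂₂ + t₂₃))
    (hβ₂₃ : β₂₃ = t₃₂ / (t₃₁ + t₃₂ + t₃₃) - t₂₂ / (t₂₁ + t₂₂ + t₂₃))
    (hγ₂₃ : γ₂₃ = t₃₃ / (t₃₁ + t₃₂ + t₃₃) - t₂₃ / (t₂₁ + t₂₂ + t₂₃))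
    (hα₃₁ : α₃₁ = t₁₁ / (t₁₁ + t₁₂ + t₁₃) - t₃₁ / (t₃₁ + t₃₂ + t₃₃))
    (hβ₃₁ : β₃₁ = t₁₂ / (t₁₁ + t₁₂ + t₁₃) - t₃₂ / (t₃₁ + t₃₂ + t₃₃))
    (hγ₃₁ : γ₃₁ = t₁₃ / (t₁₁ + t₁₂ + t₁₃) - t₃₃ / (t₃₁ + t₃₂ + t₃₃)) :
    |dist B C ^ 2 * (β₁₂ * γ₁₂ + β₂₃ * γ₂₃ - β₃₁ * γ₃₁)
        + dist C A ^ 2 * (γ₁₂ * α₁₂ + γ₂₃ * α₂₃ - γ₃₁ * α₃₁)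
        + dist A B ^ 2 * (α₁₂ * β₁₂ + α₂₃ * β₂₃ - α₃₁ * β₃₁)| ≤
      2 * Real.sqrt (-(β₁₂ * γ₁₂ * dist B C ^ 2) - γ₁₂ * α₁₂ * dist C A ^ 2
            - α₁₂ * β₁₂ * dist A B ^ 2) *
          Real.sqrt (-(β₂₃ * γ₂₃ * dist B C ^ 2) - γ₂₃ * α₂₃ * dist C A ^ 2
            - α₂₃ * β₂₃ * dist A B ^ 2) := by
  subst hα₁₂ hβ₁₂ hγ₁₂ hα₂₃ hβ₂₃ hγ₂₃ hα₃₁ hβ₃₁ hγ₃₁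
  have e₁ : (t₁₁ + t₁₂ + t₁₃) • P₁ = t₁₁ • A + t₁₂ • B + t₁₃ • C := by simpa using hP₁ 0
  have e₂ : (t₂₁ + t₂₂ + t₂₃) • P₂ = t₂₁ • A + t₂₂ • B + t₂₃ • C := by simpa using hP₂ 0
  have e₃ : (t₃₁ + t₃₂ + t₃₃) • P₃ = t₃₁ • A + t₃₂ • B + t₃₃ • C := by simpa using hP₃ 0
  have q₁₂ := norm_sub_sq_of_barycenter_eq hT₁ hT₂ e₁ e₂
  have q₂₃ := norm_sub_sq_of_barycenter_eq hT₂ hT₃ e₂ e₃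
  have q₃₁ := norm_sub_sq_of_barycenter_eq hT₃ hT₁ e₃ e₁
  have cauchy_schwarz := abs_norm_add_sq_sub_norm_sq_sub_norm_sq_le (P₂ - P₁) (P₃ - P₂)
  rw [sub_add_sub_cancel', norm_sub_rev, q₃₁, q₁₂, q₂₃] at cauchy_schwarz
  rw [← q₁₂, ← q₂₃, Real.sqrt_sq (norm_nonneg _), Real.sqrt_sq (norm_nonneg _)]
  convert cauchy_schwarz using 2
  ring

/-- Blundon type inequalities for three barycenters `P₁, P₂, P₃` of
`{A, B, C}` with weights `(tᵢ¹, tᵢ², tᵢ³)`, `i = 1, 2, 3`. -/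
theorem stmt_19 {E : Type*} [NormedAddCommGroup E] [InnerProductSpace ℝ E]
    (A B C P₁ P₂ P₃ : E)
    (t₁₁ t₁₂ t₁₃ t₂₁ t₂₂ t₂₃ t₃₁ t₃₂ t₃₃ : ℝ)
    (α₁₂ β₁₂ γ₁₂ α₂₃ β₂₃ γ₂₃ α₃₁ β₃₁ γ₃₁ : ℝ)
    (hT₁ : t₁₁ + t₁₂ + t₁₃ ≠ 0) (hT₂ : t₂₁ + t₂₂ + t₂₃ ≠ 0) (hT₃ : t₃₁ + t₃₂ + t₃₃ ≠ 0)
    (hP₁ : ∀ M : E, (t₁₁ + t₁₂ + t₁₃) • (P₁ - M) =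
      t₁₁ • (A - M) + t₁₂ • (B - M) + t₁₃ • (C - M))
    (hP₂ : ∀ M : E, (t₂₁ + t₂₂ + t₂₃) • (P₂ - M) =
      t₂₁ • (A - M) + t₂₂ • (B - M) + t₂₃ • (C - M))
    (hP₃ : ∀ M : E, (t₃₁ + t₃₂ + t₃₃) • (P₃ - M) =
      t₃₁ • (A - M) + t₃₂ • (B - M) + t₃₃ • (C - M))
    (hα₁₂ : α₁₂ = t₂₁ / (t₂₁ + t₂₂ + t₂₃) - t₁₁ / (t₁₁ + t₁₂ + t₁₃))
    (hβ₁₂ : β₁₂ = t₂₂ / (t₂₁ + t₂₂ + t₂₃) - t₁₂ / (t₁₁ + t₁₂ + t₁₃))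
    (hγ₁₂ : γ₁₂ = t₂₃ / (t₂₁ + t₂₂ + t₂₃) - t₁₃ / (t₁₁ + t₁₂ + t₁₃))
    (hα₂₃ : α₂₃ = t₃₁ / (t₃₁ + t₃₂ + t₃₃) - t₂₁ / (t₂₁ + t₂₂ + t₂₃))
    (hβ₂₃ : β₂₃ = t₃₂ / (t₃₁ + t₃₂ + t₃₃) - t₂₂ / (t₂₁ + t₂₂ + t₂₃))
    (hγ₂₃ : γ₂₃ = t₃₃ / (t₃₁ + t₃₂ + t₃₃) - t₂₃ / (t₂₁ + t₂₂ + t₂₃))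
    (hα₃₁ : α₃₁ = t₁₁ / (t₁₁ + t₁₂ + t₁₃) - t₃₁ / (t₃₁ + t₃₂ + t₃₃))
    (hβ₃₁ : β₃₁ = t₁₂ / (t₁₁ + t₁₂ + t₁₃) - t₃₂ / (t₃₁ + t₃₂ + t₃₃))
    (hγ₃₁ : γ₃₁ = t₁₃ / (t₁₁ + t₁₂ + t₁₃) - t₃₃ / (t₃₁ + t₃₂ + t₃₃))
    (h₁₂ : P₁ ≠ P₂) (h₂₃ : P₂ ≠ P₃) (h₁₃ : P₁ ≠ P₃) :
    |dist B C ^ 2 * (β₁₂ * γ₁₂ + β₂₃ * γ₂₃ - β₃₁ * γ₃₁)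
        + dist C A ^ 2 * (γ₁₂ * α₁₂ + γ₂₃ * α₂₃ - γ₃₁ * α₃₁)
        + dist A B ^ 2 * (α₁₂ * β₁₂ + α₂₃ * β₂₃ - α₃₁ * β₃₁)| ≤
      2 * Real.sqrt (-(β₁₂ * γ₁₂ * dist B C ^ 2) - γ₁₂ * α₁₂ * dist C A ^ 2
            - α₁₂ * β₁₂ * dist A B ^ 2) *
          Real.sqrt (-(β₂₃ * γ₂₃ * dist B C ^ 2) - γ₂₃ * α₂₃ * dist C A ^ 2
            - α₂₃ * β₂₃ * dist A B ^ 2) :=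
  stmt_19_general A B C P₁ P₂ P₃ t₁₁ t₁₂ t₁₃ t₂₁ t₂₂ t₂₃ t₃₁ t₃₂ t₃₃ α₁₂ β₁₂ γ₁₂ α₂₃ β₂₃ γ₂₃ α₃₁ β₃₁
    γ₃₁ hT₁ hT₂ hT₃ hP₁ hP₂ hP₃ hα₁₂ hβ₁₂ hγ₁₂ hα₂₃ hβ₂₃ hγ₂₃ hα₃₁ hβ₃₁ hγ₃₁
end
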